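/- arXiv:1508.04681 — 11 statements merged into one kernel-verified Lean document; each statement's English description precedes it below -/
import Mathlib

section
/- For all nonnegative integers k, l, m, the determinant of the matrix M_{k,l,m} satisfies 8·det(M_{k,l,m}) = (−2)^{k+l+m}·(128 − 16(k+l+m) + k·l·m); equivalently, det(M_{k,l,m}) = −(−2)^{k+l+m−3}(128 − 16(k+l+m) + klm). -/
/-- Axis (0 = x, 1 = y, 2 = z) of a basis index `t ≥ 3` (curve classes):
indices `3,…,2+k` are `C_{x,i}`, indices `3+k,…,2+k+l` are `C_{y,i}`,
and the remaining indices are `C_{z,i}`. -/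
def axOf (k l : ℕ) (t : ℕ) : ℕ :=
  if t < 3 + k then 0 else if t < 3 + k + l then 1 else 2

/-- The intersection matrix `M_{k,l,m}` in the basis
`E_x, E_y, E_z, C_{x,1},…,C_{x,k}, C_{y,1},…,C_{y,l}, C_{z,1},…,C_{z,m}`. -/
def MM (k l m : ℕ) : Matrix (Fin (3 + k + l + m)) (Fin (3 + k + l + m)) ℤ :=
  fun i j =>
    if (i : ℕ) < 3 then
      if (j : ℕ) < 3 then (if i = j then 0 else 2)
      else (if (i : ℕ) = axOf k l j then 1 else 0)
    else
      if (j : ℕ) < 3 then (if (j : ℕ) = axOf k l i then 1 else 0)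
      else (if i = j then -2 else 0)

/-!
The curve classes span the block `-2 • 1`, a scalar matrix, so multiplying `M_{k,l,m}` on the
left by `[[-2, -B], [0, 1]]`, where `B` records which `E_a` each curve class meets, makes it block
lower triangular with diagonal blocks `-2 • A - B * Bᵀ` and `-2 • 1` (`A` the Gram matrix of the
`E_a`). Each curve class meets exactly one `E_a`, so `B * Bᵀ = diag(k, l, m)`, and the `3 × 3`
determinant is `-(128 - 16 (k + l + m) + k l m)`.
-/

open Matrix

theorem Matrix.pow_card_mul_det_fromBlocks_smul_one {R m n : Type*} [CommRing R] [Fintype m]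
    [Fintype n] [DecidableEq m] [DecidableEq n] (A : Matrix m m R) (B : Matrix m n R)
    (C : Matrix n m R) (d : R) :
    d ^ Fintype.card m * (fromBlocks A B C (d • 1)).det =
      (d • A - B * C).det * d ^ Fintype.card n := by
  have hclear : fromBlocks (d • 1) (-B) 0 1 * fromBlocks A B C (d • 1) =
      fromBlocks (d • A - B * C) 0 C (d • 1) := by
    simp [fromBlocks_multiply, sub_eq_add_neg]
  simpa [det_fromBlocks_zero₂₁, det_fromBlocks_zero₁₂, det_smul] using congrArg det hclear

section axOf

variable {k l m : ℕ}

theorem axOf_three_add_castAdd_castAdd (i : Fin k) :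
    axOf k l (3 + (Fin.castAdd m (Fin.castAdd l i) : ℕ)) = 0 := by
  simp only [axOf, Fin.val_castAdd]
  split_ifs <;> omega

theorem axOf_three_add_castAdd_natAdd (i : Fin l) :
    axOf k l (3 + (Fin.castAdd m (Fin.natAdd k i) : ℕ)) = 1 := by
  simp only [axOf, Fin.val_castAdd, Fin.val_natAdd]
  split_ifs <;> omega

theorem axOf_three_add_natAdd (i : Fin m) : axOf k l (3 + (Fin.natAdd (k + l) i : ℕ)) = 2 := by
  simp only [axOf, Fin.val_natAdd]
  split_ifs <;> omega

end axOf

namespace MM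

def upperLeft : Matrix (Fin 3) (Fin 3) ℤ := of fun a b => if a = b then 0 else 2

def upperRight (k l m : ℕ) : Matrix (Fin 3) (Fin (k + l + m)) ℤ :=
  of fun a t => if (a : ℕ) = axOf k l (3 + t) then 1 else 0

def blockIndex (k l m : ℕ) : Fin 3 ⊕ Fin (k + l + m) ≃ Fin (3 + k + l + m) :=
  finSumFinEquiv.trans (finCongr (by omega))

theorem blockIndex_inl (k l m : ℕ) (a : Fin 3) : (blockIndex k l m (.inl a) : ℕ) = a := rfl

theorem blockIndex_inr (k l m : ℕ) (t : Fin (k + l + m)) :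
    (blockIndex k l m (.inr t) : ℕ) = 3 + t := rfl

theorem eq_reindex_fromBlocks (k l m : ℕ) :
    MM k l m = reindex (blockIndex k l m) (blockIndex k l m)
      (fromBlocks upperLeft (upperRight k l m) (upperRight k l m)ᵀ ((-2 : ℤ) • 1)) := by
  ext i j
  obtain ⟨p, rfl⟩ := (blockIndex k l m).surjective i
  obtain ⟨q, rfl⟩ := (blockIndex k l m).surjective j
  rcases p with a | s <;> rcases q with b | t <;>
    simp only [MM, upperLeft, upperRight, reindex_apply, submatrix_apply,
      Equiv.symm_apply_apply, fromBlocks_apply₁₁, fromBlocks_apply₁₂, fromBlocks_apply₂₁,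
      fromBlocks_apply₂₂, blockIndex_inl, blockIndex_inr, transpose_apply, of_apply,
      Matrix.smul_apply, one_apply, smul_eq_mul, Fin.ext_iff]
  all_goals split_ifs <;> omega

theorem upperRight_mul_transpose (k l m : ℕ) :
    upperRight k l m * (upperRight k l m)ᵀ = diagonal ![(k : ℤ), l, m] := by
  ext a b
  simp only [mul_apply, transpose_apply, upperRight, of_apply, Fin.sum_univ_add,
    axOf_three_add_castAdd_castAdd, axOf_three_add_castAdd_natAdd, axOf_three_add_natAdd]
  fin_cases a <;> fin_cases b <;> simp

theorem det_neg_two_smul_upperLeft_sub_diagonal (x y z : ℤ) :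
    ((-2 : ℤ) • upperLeft - diagonal ![x, y, z]).det = -(128 - 16 * (x + y + z) + x * y * z) := by
  simp [det_fin_three, upperLeft]
  ring

end MM

/-- `8·det(M_{k,l,m}) = (−2)^{k+l+m}·(128 − 16(k+l+m) + klm)`, i.e.
`det(M_{k,l,m}) = −(−2)^{k+l+m−3}(128 − 16(k+l+m) + klm)`. -/
theorem det_MM (k l m : ℕ) :
    8 * (MM k l m).det =
      (-2 : ℤ) ^ (k + l + m) *
        (128 - 16 * ((k : ℤ) + l + m) + (k : ℤ) * l * m) := by
  have hschur := pow_card_mul_det_fromBlocks_smul_one MM.upperLeft (MM.upperRight k l m)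
    (MM.upperRight k l m)ᵀ (-2)
  rw [MM.upperRight_mul_transpose, MM.det_neg_two_smul_upperLeft_sub_diagonal,
    Fintype.card_fin, Fintype.card_fin, ← det_reindex_self (MM.blockIndex k l m),
    ← MM.eq_reindex_fromBlocks] at hschur
  linear_combination -hschur
end

section
/- For all nonnegative integers k, l, m and every integer vector v ∈ ℤ^{3+k+l+m}, if v is orthogonal with respect to the bilinear form given by M_{k,l,m} to each of the three standard basis vectors corresponding to E_x, E_y, E_z (i.e., e_{E_x}ᵀ M_{k,l,m} v = e_{E_y}ᵀ M_{k,l,m} v = e_{E_z}ᵀ M_{k,l,m} v = 0), then vᵀ M_{k,l,m} v ≡ 0 (mod 4). -/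
open Matrix

/-- If `v ∈ ℤ^{3+k+l+m}` is orthogonal (for the bilinear form `M_{k,l,m}`) to the
standard basis vectors corresponding to `E_x`, `E_y`, `E_z` (the indices `< 3`),
then `vᵀ M_{k,l,m} v ≡ 0 (mod 4)`. -/
theorem self_int_mod_four (k l m : ℕ) (v : Fin (3 + k + l + m) → ℤ)
    (h : ∀ t : Fin (3 + k + l + m), (t : ℕ) < 3 → (MM k l m).mulVec v t = 0) :
    (4 : ℤ) ∣ v ⬝ᵥ (MM k l m).mulVec v := by
  classical
  have h3 : 3 ≤ 3 + k + l + m := by omega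
  let e0 : Fin (3 + k + l + m) := ⟨0, by omega⟩
  let e1 : Fin (3 + k + l + m) := ⟨1, by omega⟩
  let e2 : Fin (3 + k + l + m) := ⟨2, by omega⟩
  have he0 : (e0 : ℕ) = 0 := rfl
  have he1 : (e1 : ℕ) = 1 := rfl
  have he2 : (e2 : ℕ) = 2 := rfl
  have hax : ∀ i : Fin (3 + k + l + m), axOf k l (i : ℕ) < 3 := by
    intro i; unfold axOf; split_ifs <;> omega
  let a : Fin (3 + k + l + m) → Fin (3 + k + l + m) := fun i => ⟨axOf k l (i : ℕ), lt_of_lt_of_le (hax i) h3⟩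
  have hav : ∀ i, ((a i : Fin (3 + k + l + m)) : ℕ) = axOf k l (i : ℕ) := fun i => rfl
  -- the set of "exceptional" indices
  have hF3 : (Finset.univ.filter (fun j : Fin (3 + k + l + m) => (j : ℕ) < 3)) = {e0, e1, e2} := by
    ext j
    simp only [Finset.mem_filter, Finset.mem_univ, true_and, Finset.mem_insert,
      Finset.mem_singleton, Fin.ext_iff, he0, he1, he2]
    omega
  -- row of a curve index
  have rowC : ∀ i : Fin (3 + k + l + m), ¬ (i : ℕ) < 3 →
      (MM k l m).mulVec v i = v (a i) - 2 * v i := by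
    intro i hi
    have key : ∀ j : Fin (3 + k + l + m), MM k l m i j * v j =
        (if j = a i then v j else 0) + (if j = i then -2 * v j else 0) := by
      intro j
      simp only [MM, if_neg hi]
      by_cases hj : (j : ℕ) < 3
      · have hji : j ≠ i := by
          intro e; apply hi; rw [← e]; exact hj
        rw [if_pos hj, if_neg hji]
        by_cases hje : (j : ℕ) = axOf k l (i : ℕ)
        · have hja : j = a i := Fin.ext (by rw [hav]; exact hje)
          rw [if_pos hje, if_pos hja]; ring
        · have hja : j ≠ a i := by
            intro e; apply hje; rw [e, hav]
          rw [if_neg hje, if_neg hja]; ring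
      · have hja : j ≠ a i := by
          intro e; apply hj; rw [e, hav]; exact hax i
        rw [if_neg hj, if_neg hja]
        by_cases hij : i = j
        · rw [if_pos hij, if_pos hij.symm]; ring
        · rw [if_neg hij, if_neg (fun e => hij e.symm)]; ring
    simp only [mulVec, dotProduct]
    rw [Finset.sum_congr rfl (fun j _ => key j), Finset.sum_add_distrib,
      Finset.sum_ite_eq' Finset.univ (a i) (fun j => v j),
      Finset.sum_ite_eq' Finset.univ i (fun j => -2 * v j)]
    simp only [Finset.mem_univ, if_pos]
    ring
  -- entries of MM among exceptional indices
  have hEE : ∀ r s : Fin (3 + k + l + m), (r : ℕ) < 3 → (s : ℕ) < 3 →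
      MM k l m r s = if r = s then 0 else 2 := by
    intro r s hr hs
    simp only [MM]
    rw [if_pos hr, if_pos hs]
  -- entries of MM from exceptional row to curve column
  have hEC : ∀ (r : Fin (3 + k + l + m)) (j : Fin (3 + k + l + m)), (r : ℕ) < 3 → ¬ (j : ℕ) < 3 →
      MM k l m r j = if (r : ℕ) = axOf k l (j : ℕ) then 1 else 0 := by
    intro r j hr hj
    simp only [MM]
    rw [if_pos hr, if_neg hj]
  -- the bracket evaluation on curve columns
  have hB : ∀ j : Fin (3 + k + l + m), ¬ (j : ℕ) < 3 →
      (v e0 - 2) * MM k l m e0 j + (v e1 - 2) * MM k l m e1 j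
        + (v e2 - 2) * MM k l m e2 j = v (a j) - 2 := by
    intro j hj
    rw [hEC e0 j (by rw [he0]; omega) hj, hEC e1 j (by rw [he1]; omega) hj,
      hEC e2 j (by rw [he2]; omega) hj, he0, he1, he2]
    have hq := hax j
    rcases (by omega : axOf k l (j : ℕ) = 0 ∨ axOf k l (j : ℕ) = 1 ∨ axOf k l (j : ℕ) = 2)
      with hq' | hq' | hq'
    · have ha' : a j = e0 := Fin.ext (by rw [hav, hq', he0])
      rw [hq', ha']; norm_num
    · have ha' : a j = e1 := Fin.ext (by rw [hav, hq', he1])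
      rw [hq', ha']; norm_num
    · have ha' : a j = e2 := Fin.ext (by rw [hav, hq', he2])
      rw [hq', ha']; norm_num
  -- the key vanishing sum
  have key0 : ∑ j : Fin (3 + k + l + m), ((v e0 - 2) * MM k l m e0 j + (v e1 - 2) * MM k l m e1 j
      + (v e2 - 2) * MM k l m e2 j) * v j = 0 := by
    have expand : ∑ j : Fin (3 + k + l + m), ((v e0 - 2) * MM k l m e0 j + (v e1 - 2) * MM k l m e1 j
        + (v e2 - 2) * MM k l m e2 j) * v j
        = (v e0 - 2) * (MM k l m).mulVec v e0 + (v e1 - 2) * (MM k l m).mulVec v e1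
          + (v e2 - 2) * (MM k l m).mulVec v e2 := by
      simp only [mulVec, dotProduct, Finset.mul_sum]
      rw [← Finset.sum_add_distrib, ← Finset.sum_add_distrib]
      exact Finset.sum_congr rfl fun j _ => by ring
    rw [expand, h e0 (by rw [he0]; omega), h e1 (by rw [he1]; omega),
      h e2 (by rw [he2]; omega)]
    ring
  have hne01 : e0 ≠ e1 := by simp [Fin.ext_iff, he0, he1]
  have hne02 : e0 ≠ e2 := by simp [Fin.ext_iff, he0, he2]
  have hne12 : e1 ≠ e2 := by simp [Fin.ext_iff, he1, he2]
  -- split the key sum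
  rw [← Finset.sum_filter_add_sum_filter_not Finset.univ (fun j : Fin (3 + k + l + m) => (j : ℕ) < 3)]
    at key0
  rw [hF3] at key0
  rw [Finset.sum_insert (by simp [hne01, hne02]),
    Finset.sum_insert (by simp [hne12]), Finset.sum_singleton] at key0
  rw [hEE e0 e0 (by rw [he0]; omega) (by rw [he0]; omega),
    hEE e1 e0 (by rw [he1]; omega) (by rw [he0]; omega),
    hEE e2 e0 (by rw [he2]; omega) (by rw [he0]; omega),
    hEE e0 e1 (by rw [he0]; omega) (by rw [he1]; omega),
    hEE e1 e1 (by rw [he1]; omega) (by rw [he1]; omega),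
    hEE e2 e1 (by rw [he2]; omega) (by rw [he1]; omega),
    hEE e0 e2 (by rw [he0]; omega) (by rw [he2]; omega),
    hEE e1 e2 (by rw [he1]; omega) (by rw [he2]; omega),
    hEE e2 e2 (by rw [he2]; omega) (by rw [he2]; omega)] at key0
  rw [if_pos rfl, if_pos rfl, if_pos rfl, if_neg hne01, if_neg hne02, if_neg hne12,
    if_neg (Ne.symm hne01), if_neg (Ne.symm hne02), if_neg (Ne.symm hne12)] at key0
  rw [Finset.sum_congr rfl (fun j hj => by
    rw [hB j (by simpa using (Finset.mem_filter.mp hj).2)])] at key0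
  -- now key0 : C + ∑_{FC} (v (a j) - 2) * v j = 0 for an explicit C
  -- compute the self-intersection
  have goal_eq : v ⬝ᵥ (MM k l m).mulVec v
      = ∑ j ∈ Finset.univ.filter (fun j : Fin (3 + k + l + m) => ¬ (j : ℕ) < 3),
          v j * (v (a j) - 2 * v j) := by
    rw [dotProduct,
      ← Finset.sum_filter_add_sum_filter_not Finset.univ (fun j : Fin (3 + k + l + m) => (j : ℕ) < 3)]
    have hz : ∑ j ∈ Finset.univ.filter (fun j : Fin (3 + k + l + m) => (j : ℕ) < 3),
        v j * (MM k l m).mulVec v j = 0 := by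
      apply Finset.sum_eq_zero
      intro j hj
      rw [h j (by simpa using (Finset.mem_filter.mp hj).2)]
      ring
    rw [hz, zero_add]
    exact Finset.sum_congr rfl fun j hj => by
      rw [rowC j (by simpa using (Finset.mem_filter.mp hj).2)]
  -- rewrite each summand
  have split_eq : ∑ j ∈ Finset.univ.filter (fun j : Fin (3 + k + l + m) => ¬ (j : ℕ) < 3),
        v j * (v (a j) - 2 * v j)
      = (∑ j ∈ Finset.univ.filter (fun j : Fin (3 + k + l + m) => ¬ (j : ℕ) < 3),
          (v (a j) - 2) * v j)
        - 2 * ∑ j ∈ Finset.univ.filter (fun j : Fin (3 + k + l + m) => ¬ (j : ℕ) < 3),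
            v j * (v j - 1) := by
    rw [Finset.mul_sum, ← Finset.sum_sub_distrib]
    exact Finset.sum_congr rfl fun j _ => by ring
  -- evenness of the square-ish sum
  have hW : (2 : ℤ) ∣ ∑ j ∈ Finset.univ.filter (fun j : Fin (3 + k + l + m) => ¬ (j : ℕ) < 3),
      v j * (v j - 1) := by
    apply Finset.dvd_sum
    intro j _
    have := Int.even_mul_succ_self (v j - 1)
    rw [sub_add_cancel] at this
    rcases this with ⟨c, hc⟩
    exact ⟨c, by rw [mul_comm]; rw [hc]; ring⟩
  rcases hW with ⟨w, hw⟩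
  have hU : (∑ j ∈ Finset.univ.filter (fun j : Fin (3 + k + l + m) => ¬ (j : ℕ) < 3),
      (v (a j) - 2) * v j)
      = -(((v e0 - 2) * 0 + (v e1 - 2) * 2 + (v e2 - 2) * 2) * v e0
        + (((v e0 - 2) * 2 + (v e1 - 2) * 0 + (v e2 - 2) * 2) * v e1
          + ((v e0 - 2) * 2 + (v e1 - 2) * 2 + (v e2 - 2) * 0) * v e2)) := by
    linarith [key0]
  rw [goal_eq, split_eq, hU, hw]
  exact ⟨-((v e0 * v e1 + v e0 * v e2 + v e1 * v e2) - 2 * (v e0 + v e1 + v e2)) - w,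
    by ring⟩
end

section
/- Fix a nonnegative integer k and consider the matrix M_{k,0,0} of size 3+k. Then: (i) for every integer vector v ∈ ℤ^{3+k} with e_{E_x}ᵀ M_{k,0,0} v = 0, one has vᵀ M_{k,0,0} v ≡ 0 (mod 4); and (ii) for every integer vector v ∈ ℤ^{3+k}, both e_{E_y}ᵀ M_{k,0,0} v and e_{E_z}ᵀ M_{k,0,0} v are even. -/
/-!
Write `v = (a, b, c, w₁, …, w_k)`. Then `M v = (2b + 2c + ∑ wᵢ, 2a + 2c, 2a + 2b, a - 2wᵢ)`,
so the `E_y` and `E_z` rows are visibly even, and `vᵀ M v = 4(ab + bc + ca) + 2a ∑ wᵢ - 2 ∑ wᵢ²`.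
Orthogonality to `E_x` means `∑ wᵢ = -2(b + c)`, which turns this into `4bc - 2 ∑ wᵢ²`;
finally `∑ wᵢ² ≡ ∑ wᵢ ≡ 0 (mod 2)`.
-/

open Matrix

theorem Fin.sum_univ_three_add {M : Type*} [AddCommMonoid M] {k : ℕ} (f : Fin (3 + k) → M) :
    ∑ j, f j = f ⟨0, by grind⟩ + f ⟨1, by grind⟩ + f ⟨2, by grind⟩
      + ∑ i : Fin k, f ⟨3 + i, by grind⟩ := by
  rw [Fin.sum_univ_add, Fin.sum_univ_three]
  rfl

theorem Int.even_sum_sq_iff {ι : Type*} (s : Finset ι) (f : ι → ℤ) :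
    Even (∑ i ∈ s, f i ^ 2) ↔ Even (∑ i ∈ s, f i) := by
  refine Int.even_sub.mp ?_
  rw [← Finset.sum_sub_distrib]
  refine Finset.even_sum _ fun i _ => ?_
  simpa [sq, mul_sub] using Int.even_mul_pred_self (f i)

namespace MM

variable {k : ℕ} (v : Fin (3 + k + 0 + 0) → ℤ)

theorem sum_univ_k00 {M : Type*} [AddCommMonoid M] (f : Fin (3 + k + 0 + 0) → M) :
    ∑ j, f j = f ⟨0, by grind⟩ + f ⟨1, by grind⟩ + f ⟨2, by grind⟩
      + ∑ i : Fin k, f ⟨3 + i, by grind⟩ :=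
  Fin.sum_univ_three_add f

theorem k00_mulVec_zero :
    (MM k 0 0 *ᵥ v) ⟨0, by grind⟩ =
      2 * v ⟨1, by grind⟩ + 2 * v ⟨2, by grind⟩ + ∑ i : Fin k, v ⟨3 + i, by grind⟩ := by
  simp [mulVec, dotProduct, sum_univ_k00, MM, axOf]

theorem k00_mulVec_one :
    (MM k 0 0 *ᵥ v) ⟨1, by grind⟩ = 2 * v ⟨0, by grind⟩ + 2 * v ⟨2, by grind⟩ := by
  simp [mulVec, dotProduct, sum_univ_k00, MM, axOf]

theorem k00_mulVec_two :
    (MM k 0 0 *ᵥ v) ⟨2, by grind⟩ = 2 * v ⟨0, by grind⟩ + 2 * v ⟨1, by grind⟩ := by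
  simp [mulVec, dotProduct, sum_univ_k00, MM, axOf]

theorem k00_mulVec_curve (t : Fin k) :
    (MM k 0 0 *ᵥ v) ⟨3 + t, by grind⟩ = v ⟨0, by grind⟩ - 2 * v ⟨3 + t, by grind⟩ := by
  simp only [mulVec, dotProduct, sum_univ_k00, MM, axOf]
  simp [Fin.val_inj, sub_eq_add_neg]

theorem k00_dotProduct_mulVec_self :
    v ⬝ᵥ (MM k 0 0 *ᵥ v) =
      4 * (v ⟨0, by grind⟩ * v ⟨1, by grind⟩ + v ⟨1, by grind⟩ * v ⟨2, by grind⟩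
          + v ⟨2, by grind⟩ * v ⟨0, by grind⟩)
        + 2 * v ⟨0, by grind⟩ * ∑ i : Fin k, v ⟨3 + i, by grind⟩
        - 2 * ∑ i : Fin k, v ⟨3 + i, by grind⟩ ^ 2 := by
  have curves : ∑ i : Fin k, v ⟨3 + i, by grind⟩ * (MM k 0 0 *ᵥ v) ⟨3 + i, by grind⟩ =
      v ⟨0, by grind⟩ * ∑ i : Fin k, v ⟨3 + i, by grind⟩
        - 2 * ∑ i : Fin k, v ⟨3 + i, by grind⟩ ^ 2 := by
    simp only [k00_mulVec_curve, Finset.mul_sum, ← Finset.sum_sub_distrib]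
    exact Finset.sum_congr rfl fun i _ => by ring
  rw [dotProduct, sum_univ_k00, k00_mulVec_zero, k00_mulVec_one, k00_mulVec_two, curves]
  ring

end MM

/-- For the matrix `M_{k,0,0}`: (i) any integer vector orthogonal to `e_{E_x}`
(w.r.t. `M_{k,0,0}`) has self-intersection divisible by 4; (ii) every integer
vector pairs evenly with `e_{E_y}` and with `e_{E_z}`. -/
theorem M_k00_parity (k : ℕ) :
    (∀ v : Fin (3 + k + 0 + 0) → ℤ,
        (MM k 0 0).mulVec v ⟨0, by omega⟩ = 0 →
          (4 : ℤ) ∣ v ⬝ᵥ (MM k 0 0).mulVec v) ∧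
    (∀ v : Fin (3 + k + 0 + 0) → ℤ,
        Even ((MM k 0 0).mulVec v ⟨1, by omega⟩) ∧
        Even ((MM k 0 0).mulVec v ⟨2, by omega⟩)) := by
  refine ⟨fun v hv => ?_, fun v => ?_⟩
  · have curve_sum :
        ∑ i : Fin k, v ⟨3 + i, by grind⟩ = -2 * (v ⟨1, by grind⟩ + v ⟨2, by grind⟩) := by
      linear_combination hv - MM.k00_mulVec_zero v
    obtain ⟨t, ht⟩ : Even (∑ i : Fin k, v ⟨3 + i, by grind⟩ ^ 2) :=
      (Int.even_sum_sq_iff _ _).mpr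
        ⟨-(v ⟨1, by grind⟩ + v ⟨2, by grind⟩), by linear_combination curve_sum⟩
    rw [MM.k00_dotProduct_mulVec_self]
    exact ⟨v ⟨1, by grind⟩ * v ⟨2, by grind⟩ - t,
      by linear_combination 2 * v ⟨0, by grind⟩ * curve_sum - 2 * ht⟩
  · exact ⟨⟨v ⟨0, by grind⟩ + v ⟨2, by grind⟩, by linear_combination MM.k00_mulVec_one v⟩,
      ⟨v ⟨0, by grind⟩ + v ⟨1, by grind⟩, by linear_combination MM.k00_mulVec_two v⟩⟩
end

section
/- There is no point (x0,x1,y0,y1,z0,z1) ∈ ℂ⁶ with (x0,x1) ≠ (0,0), (y0,y1) ≠ (0,0), and (z0,z1) ≠ (0,0) at which Q̃ and all six partial derivatives ∂Q̃/∂x0, ∂Q̃/∂x1, ∂Q̃/∂y0, ∂Q̃/∂y1, ∂Q̃/∂z0, ∂Q̃/∂z1 simultaneously vanish. -/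
open MvPolynomial

/-- The tri-degree (2,2,2) polynomial
`Q̃ = (x0²+x1²)(y0²+y1²)(z0²+z1²) + 3·x0x1y0y1z0z1 − 2·x1²y0y1z0z1`,
with variables `X 0 = x0, X 1 = x1, X 2 = y0, X 3 = y1, X 4 = z0, X 5 = z1`. -/
noncomputable def Qt : MvPolynomial (Fin 6) ℂ :=
  (X 0 ^ 2 + X 1 ^ 2) * (X 2 ^ 2 + X 3 ^ 2) * (X 4 ^ 2 + X 5 ^ 2)
    + 3 * (X 0 * X 1 * X 2 * X 3 * X 4 * X 5)
    - 2 * (X 1 ^ 2 * X 2 * X 3 * X 4 * X 5)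

lemma pd2 (i : Fin 6) : pderiv i (2 : MvPolynomial (Fin 6) ℂ) = 0 := by
  rw [← map_ofNat (C : ℂ →+* MvPolynomial (Fin 6) ℂ) 2, pderiv_C]

lemma pd3 (i : Fin 6) : pderiv i (3 : MvPolynomial (Fin 6) ℂ) = 0 := by
  rw [← map_ofNat (C : ℂ →+* MvPolynomial (Fin 6) ℂ) 3, pderiv_C]

lemma pdX (i j : Fin 6) : pderiv i (X j : MvPolynomial (Fin 6) ℂ) = if j = i then 1 else 0 := by
  rcases eq_or_ne j i with h | h
  · subst h; simp
  · simp [h]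

lemma both_ne {x y : ℂ} (h : x^2 + y^2 = 0) (hxy : ¬(x = 0 ∧ y = 0)) : x ≠ 0 ∧ y ≠ 0 := by
  constructor
  · rintro rfl
    have hy : y^2 = 0 := by linear_combination h
    exact hxy ⟨rfl, pow_eq_zero_iff (two_ne_zero) |>.mp hy⟩
  · rintro rfl
    have hx : x^2 = 0 := by linear_combination h
    exact hxy ⟨pow_eq_zero_iff (two_ne_zero) |>.mp hx, rfl⟩

lemma zero_case (a b d e f : ℂ)
    (hab : ¬(a = 0 ∧ b = 0)) (hd : d ≠ 0) (hef : ¬(e = 0 ∧ f = 0))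
    (F1 : d^2*(a*(e^2+f^2)) = 0)
    (F2 : d^2*(b*(e^2+f^2)) = 0)
    (F5 : (e*d^2)*(a^2+b^2) = 0)
    (F3 : (b*d*e*f)*(3*a-2*b) = 0) : False := by
  have hd2 : d^2 ≠ 0 := pow_ne_zero 2 hd
  have h1 : a*(e^2+f^2) = 0 := (mul_eq_zero.mp F1).resolve_left hd2
  have h2 : b*(e^2+f^2) = 0 := (mul_eq_zero.mp F2).resolve_left hd2
  by_cases hE : e^2+f^2 = 0
  · obtain ⟨he, hf⟩ := both_ne hE hef
    have hA : a^2+b^2 = 0 := (mul_eq_zero.mp F5).resolve_left (mul_ne_zero he hd2)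
    obtain ⟨ha, hb⟩ := both_ne hA hab
    have h3 : 3*a-2*b = 0 :=
      (mul_eq_zero.mp F3).resolve_left
        (mul_ne_zero (mul_ne_zero (mul_ne_zero hb hd) he) hf)
    have hb2 : b^2 = 0 := by linear_combination (9*hA - (3*a+2*b)*h3)/13
    exact hb (pow_eq_zero_iff (two_ne_zero) |>.mp hb2)
  · exact hab ⟨(mul_eq_zero.mp h1).resolve_right hE, (mul_eq_zero.mp h2).resolve_right hE⟩

lemma key (a b c d e f : ℂ)
    (hab : ¬(a = 0 ∧ b = 0)) (hcd : ¬(c = 0 ∧ d = 0)) (hef : ¬(e = 0 ∧ f = 0))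
    (E1 : 2*a*(c^2+d^2)*(e^2+f^2) + 3*b*(c*d*e*f) = 0)
    (E2 : 2*b*(c^2+d^2)*(e^2+f^2) + 3*a*(c*d*e*f) - 4*b*(c*d*e*f) = 0)
    (E3 : 2*c*(a^2+b^2)*(e^2+f^2) + 3*a*b*(d*e*f) - 2*b^2*(d*e*f) = 0)
    (E4 : 2*d*(a^2+b^2)*(e^2+f^2) + 3*a*b*(c*e*f) - 2*b^2*(c*e*f) = 0)
    (E5 : 2*e*(a^2+b^2)*(c^2+d^2) + 3*a*b*(c*d*f) - 2*b^2*(c*d*f) = 0)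
    (E6 : 2*f*(a^2+b^2)*(c^2+d^2) + 3*a*b*(c*d*e) - 2*b^2*(c*d*e) = 0) : False := by
  by_cases hc0 : c = 0
  · subst hc0
    have hd : d ≠ 0 := fun h => hcd ⟨rfl, h⟩
    exact zero_case a b d e f hab hd hef
      (by linear_combination E1/2) (by linear_combination E2/2)
      (by linear_combination E5/2) (by linear_combination E3)
  by_cases hd0 : d = 0
  · subst hd0
    exact zero_case a b c e f hab hc0 hef
      (by linear_combination E1/2) (by linear_combination E2/2)
      (by linear_combination E5/2) (by linear_combination E4)
  by_cases he0 : e = 0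
  · subst he0
    have hf : f ≠ 0 := fun h => hef ⟨rfl, h⟩
    exact zero_case a b f c d hab hf hcd
      (by linear_combination E1/2) (by linear_combination E2/2)
      (by linear_combination E3/2) (by linear_combination E5)
  by_cases hf0 : f = 0
  · subst hf0
    exact zero_case a b e c d hab he0 hcd
      (by linear_combination E1/2) (by linear_combination E2/2)
      (by linear_combination E3/2) (by linear_combination E6)
  -- generic case: c, d, e, f all nonzero
  have hcdef : c*d*e*f ≠ 0 :=
    mul_ne_zero (mul_ne_zero (mul_ne_zero hc0 hd0) he0) hf0
  have hstar : 3*b^2 + 4*a*b - 3*a^2 = 0 := by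
    have h' : (c*d*e*f)*(3*b^2 + 4*a*b - 3*a^2) = 0 := by linear_combination b*E1 - a*E2
    exact (mul_eq_zero.mp h').resolve_left hcdef
  by_cases hb3 : b*(3*a-2*b) = 0
  · rcases mul_eq_zero.mp hb3 with hb | h3
    · have ha2 : a^2 = 0 := by linear_combination ((3*b+4*a)*hb - hstar)/3
      exact hab ⟨pow_eq_zero_iff (two_ne_zero) |>.mp ha2, hb⟩
    · have hb2 : b^2 = 0 := by linear_combination (9*hstar + (9*a-6*b)*h3)/39
      have hb : b = 0 := pow_eq_zero_iff (two_ne_zero) |>.mp hb2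
      have ha : a = 0 := by linear_combination (h3 + 2*hb)/3
      exact hab ⟨ha, hb⟩
  · have hb : b ≠ 0 := fun h => hb3 (by rw [h, zero_mul])
    have h32 : 3*a-2*b ≠ 0 := fun h => hb3 (by rw [h, mul_zero])
    have hd2 : d^2 = c^2 := by
      have h' : (b*(3*a-2*b)*e*f)*(d^2-c^2) = 0 := by linear_combination d*E3 - c*E4
      have := (mul_eq_zero.mp h').resolve_left
        (mul_ne_zero (mul_ne_zero (mul_ne_zero hb h32) he0) hf0)
      linear_combination this
    have hf2 : f^2 = e^2 := by
      have h' : (b*(3*a-2*b)*c*d)*(f^2-e^2) = 0 := by linear_combination f*E5 - e*E6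
      have := (mul_eq_zero.mp h').resolve_left
        (mul_ne_zero (mul_ne_zero (mul_ne_zero hb h32) hc0) hd0)
      linear_combination this
    have hE1' : 8*a*(c^2*e^2) + 3*b*(c*d*e*f) = 0 := by
      linear_combination E1 - 4*a*e^2*hd2 - 2*a*(c^2+d^2)*hf2
    have hE2' : 8*b*(c^2*e^2) + (3*a-4*b)*(c*d*e*f) = 0 := by
      linear_combination E2 - 4*b*e^2*hd2 - 2*b*(c^2+d^2)*hf2
    have hs2 : (c*d*e*f)^2 = (c^2*e^2)^2 := by
      linear_combination c^2*e^2*f^2*hd2 + c^4*e^2*hf2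
    have hprod : (c^2*e^2)^2 * (55*a*b + 12*b^2) = 0 := by
      linear_combination (8*b*(c^2*e^2))*hE1' - (3*b*(c*d*e*f))*hE2' + 3*b*(3*a-4*b)*hs2
    have ht : (c^2*e^2)^2 ≠ 0 :=
      pow_ne_zero 2 (mul_ne_zero (pow_ne_zero 2 hc0) (pow_ne_zero 2 he0))
    have h55 : 55*a + 12*b = 0 := by
      have h' : (55*a*b + 12*b^2) = 0 := (mul_eq_zero.mp hprod).resolve_left ht
      have h'' : b*(55*a+12*b) = 0 := by linear_combination h'
      exact (mul_eq_zero.mp h'').resolve_left hb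
    have hb2 : b^2 = 0 := by linear_combination (3025*hstar + (165*a-256*b)*h55)/6003
    exact hb (pow_eq_zero_iff (two_ne_zero) |>.mp hb2)

/-- There is no point of `ℂ⁶` with `(x0,x1) ≠ (0,0)`, `(y0,y1) ≠ (0,0)`,
`(z0,z1) ≠ (0,0)` at which `Q̃` and all six of its partial derivatives vanish. -/
theorem sing_Qt_empty :
    ¬ ∃ p : Fin 6 → ℂ,
      ((p 0, p 1) ≠ ((0 : ℂ), (0 : ℂ))) ∧
      ((p 2, p 3) ≠ ((0 : ℂ), (0 : ℂ))) ∧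
      ((p 4, p 5) ≠ ((0 : ℂ), (0 : ℂ))) ∧
      eval p Qt = 0 ∧
      (∀ i : Fin 6, eval p (pderiv i Qt) = 0) := by
  rintro ⟨p, h1, h2, h3, -, h5⟩
  have hab : ¬(p 0 = 0 ∧ p 1 = 0) := fun h => h1 (by rw [h.1, h.2])
  have hcd : ¬(p 2 = 0 ∧ p 3 = 0) := fun h => h2 (by rw [h.1, h.2])
  have hef : ¬(p 4 = 0 ∧ p 5 = 0) := fun h => h3 (by rw [h.1, h.2])
  have E1 : 2*(p 0)*((p 2)^2+(p 3)^2)*((p 4)^2+(p 5)^2) + 3*(p 1)*(p 2*p 3*p 4*p 5) = 0 := by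
    have h := h5 0
    simp only [Qt, map_add, map_sub, pderiv_mul, pderiv_pow, pd2, pd3, pdX] at h
    simp at h
    linear_combination h
  have E2 : 2*(p 1)*((p 2)^2+(p 3)^2)*((p 4)^2+(p 5)^2) + 3*(p 0)*(p 2*p 3*p 4*p 5)
      - 4*(p 1)*(p 2*p 3*p 4*p 5) = 0 := by
    have h := h5 1
    simp only [Qt, map_add, map_sub, pderiv_mul, pderiv_pow, pd2, pd3, pdX] at h
    simp at h
    linear_combination h
  have E3 : 2*(p 2)*((p 0)^2+(p 1)^2)*((p 4)^2+(p 5)^2) + 3*(p 0)*(p 1)*(p 3*p 4*p 5)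
      - 2*(p 1)^2*(p 3*p 4*p 5) = 0 := by
    have h := h5 2
    simp only [Qt, map_add, map_sub, pderiv_mul, pderiv_pow, pd2, pd3, pdX] at h
    simp at h
    linear_combination h
  have E4 : 2*(p 3)*((p 0)^2+(p 1)^2)*((p 4)^2+(p 5)^2) + 3*(p 0)*(p 1)*(p 2*p 4*p 5)
      - 2*(p 1)^2*(p 2*p 4*p 5) = 0 := by
    have h := h5 3
    simp only [Qt, map_add, map_sub, pderiv_mul, pderiv_pow, pd2, pd3, pdX] at h
    simp at h
    linear_combination h
  have E5 : 2*(p 4)*((p 0)^2+(p 1)^2)*((p 2)^2+(p 3)^2) + 3*(p 0)*(p 1)*(p 2*p 3*p 5)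
      - 2*(p 1)^2*(p 2*p 3*p 5) = 0 := by
    have h := h5 4
    simp only [Qt, map_add, map_sub, pderiv_mul, pderiv_pow, pd2, pd3, pdX] at h
    simp at h
    linear_combination h
  have E6 : 2*(p 5)*((p 0)^2+(p 1)^2)*((p 2)^2+(p 3)^2) + 3*(p 0)*(p 1)*(p 2*p 3*p 4)
      - 2*(p 1)^2*(p 2*p 3*p 4) = 0 := by
    have h := h5 5
    simp only [Qt, map_add, map_sub, pderiv_mul, pderiv_pow, pd2, pd3, pdX] at h
    simp at h
    linear_combination h
  exact key (p 0) (p 1) (p 2) (p 3) (p 4) (p 5) hab hcd hef E1 E2 E3 E4 E5 E6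
end

section
/- For every triple (k,l,m) ∈ N with (k,l,m) ≠ (3,3,3), there exists an injective ℤ-linear map φ : ℤ^{3+k+l+m} → ℤ²² such that (φu)ᵀ M_{K3} (φv) = uᵀ M_{k,l,m} v for all u, v ∈ ℤ^{3+k+l+m}, and such that the embedding is primitive, i.e., the quotient group ℤ²² / φ(ℤ^{3+k+l+m}) is torsion-free. -/
open Matrix

/-- Block index of `t ∈ {0,…,21}` for the decomposition `M₂ ⊕ M₂ ⊕ M₂ ⊕ M₈ ⊕ M₈`. -/
def blkOf (t : ℕ) : ℕ :=
  if t < 2 then 0 else if t < 4 then 1 else if t < 6 then 2 else if t < 14 then 3 else 4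

/-- Offset of `t ∈ {0,…,21}` within its block. -/
def offOf (t : ℕ) : ℕ :=
  if t < 2 then t else if t < 4 then t - 2 else if t < 6 then t - 4
  else if t < 14 then t - 6 else t - 14

/-- The entries of the 8×8 block `M₈` (0-indexed): diagonal `−2`, entry `1` at the
(1-indexed) pairs `(1,4),(2,3),(3,4),(4,5),(5,6),(6,7),(7,8)` and symmetrically. -/
def M8e (i j : ℕ) : ℤ :=
  if i = j then -2
  else if (min i j, max i j) ∈
      [((0 : ℕ), (3 : ℕ)), (1, 2), (2, 3), (3, 4), (4, 5), (5, 6), (6, 7)] then 1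
  else 0

/-- The K3 lattice matrix `M_{K3} = M₂ ⊕ M₂ ⊕ M₂ ⊕ M₈ ⊕ M₈`, where `M₂ = [[0,1],[1,0]]`. -/
def MK3 : Matrix (Fin 22) (Fin 22) ℤ :=
  fun i j =>
    if blkOf i ≠ blkOf j then 0
    else if blkOf i < 3 then (if i = j then 0 else 1)
    else M8e (offOf i) (offOf j)

/-- `(k,l,m) ∈ N`: some permutation of `(k,l,m)` is componentwise at most one of
`(6,0,0)`, `(5,1,1)`, `(4,2,2)`, `(3,3,3)`. -/
def inN (k l m : ℕ) : Prop :=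
  ∃ a b c : ℕ, ({a, b, c} : Multiset ℕ) = ({k, l, m} : Multiset ℕ) ∧
    ((a ≤ 6 ∧ b ≤ 0 ∧ c ≤ 0) ∨ (a ≤ 5 ∧ b ≤ 1 ∧ c ≤ 1) ∨
     (a ≤ 4 ∧ b ≤ 2 ∧ c ≤ 2) ∨ (a ≤ 3 ∧ b ≤ 3 ∧ c ≤ 3))

/-! ### Auxiliary construction: an explicit uniform primitive embedding -/

/-- Positions (in `Fin 22`) of eight pairwise orthogonal roots of `M₈ ⊕ M₈`
(simple roots `α₀, α₁, α₄, α₆` in each `E₈` block). -/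
def Ppos (j : ℕ) : ℕ :=
  if j = 0 then 6 else if j = 1 then 7 else if j = 2 then 10 else if j = 3 then 12
  else if j = 4 then 14 else if j = 5 then 15 else if j = 6 then 18 else 20

/-- Position of the hyperbolic-part summand used for a curve class on axis `a`. -/
def upos (a : ℕ) : ℕ := if a = 0 then 3 else if a = 1 then 0 else 5

/-- Images of `E_x, E_y, E_z`. -/
def cvE (i : ℕ) : Fin 22 → ℤ :=
  if i = 0 then fun s => if (s:ℕ) = 0 ∨ (s:ℕ) = 2 then 1 else 0
  else if i = 1 then fun s => if (s:ℕ) = 1 ∨ (s:ℕ) = 3 then 1 else 0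
  else fun s => if (s:ℕ) = 0 ∨ (s:ℕ) = 3 then 2 else if (s:ℕ) = 4 then 1 else 0

/-- Image of the `j`-th curve class on axis `a`. -/
def cvC (a j : ℕ) : Fin 22 → ℤ :=
  fun s => if (s:ℕ) = Ppos j ∨ (s:ℕ) = upos a then 1 else 0

/-- The pairing in the K3 lattice. -/
def bf (x y : Fin 22 → ℤ) : ℤ := x ⬝ᵥ MK3.mulVec y

set_option maxRecDepth 1000000 in
lemma bfEE : ∀ i i' : Fin 3, bf (cvE i) (cvE i') = if i = i' then 0 else 2 := by decide
set_option maxRecDepth 1000000 in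
lemma bfEC : ∀ i a : Fin 3, ∀ j : Fin 8,
    bf (cvE i) (cvC a j) = if (i:ℕ) = (a:ℕ) then 1 else 0 := by decide
set_option maxRecDepth 1000000 in
lemma bfCE : ∀ i a : Fin 3, ∀ j : Fin 8,
    bf (cvC a j) (cvE i) = if (i:ℕ) = (a:ℕ) then 1 else 0 := by decide
set_option maxRecDepth 1000000 in
lemma bfCC : ∀ a a' : Fin 3, ∀ j j' : Fin 8,
    bf (cvC a j) (cvC a' j') = if j = j' then -2 else 0 := by decide

/-- The `t`-th column of the embedding matrix. -/
def colv (k l t : ℕ) : Fin 22 → ℤ :=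
  if t < 3 then cvE t else cvC (axOf k l t) (t - 3)

lemma colv_lt {k l t : ℕ} (h : t < 3) : colv k l t = cvE t := by
  unfold colv; rw [if_pos h]

lemma colv_ge {k l t : ℕ} (h : ¬ t < 3) : colv k l t = cvC (axOf k l t) (t - 3) := by
  unfold colv; rw [if_neg h]

lemma axOf_lt (k l t : ℕ) : axOf k l t < 3 := by
  unfold axOf; split_ifs <;> omega

/-- Coordinate (in `Fin 22`) giving the dual functional of the `t`-th column. -/
def cposN (t : ℕ) : ℕ :=
  if t = 0 then 2 else if t = 1 then 1 else if t = 2 then 4 else Ppos (t - 3)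

lemma cposN_lt (t : ℕ) : cposN t < 22 := by
  unfold cposN Ppos; split_ifs <;> omega

def cposF (t : ℕ) : Fin 22 := ⟨cposN t, cposN_lt t⟩

set_option maxRecDepth 1000000 in
lemma entryE : ∀ i : Fin 3, ∀ t : Fin 11,
    cvE (i:ℕ) (cposF (t:ℕ)) = if (t:ℕ) = (i:ℕ) then 1 else 0 := by decide
set_option maxRecDepth 1000000 in
lemma entryC : ∀ a : Fin 3, ∀ j : Fin 8, ∀ t : Fin 11,
    cvC (a:ℕ) (j:ℕ) (cposF (t:ℕ)) = if (t:ℕ) = (j:ℕ) + 3 then 1 else 0 := by decide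

/-- The embedding matrix. -/
def Amat (k l m : ℕ) : Matrix (Fin 22) (Fin (3+k+l+m)) ℤ := fun s t => colv k l (t:ℕ) s

/-- A left inverse of the embedding matrix. -/
def Bmat (k l m : ℕ) : Matrix (Fin (3+k+l+m)) (Fin 22) ℤ :=
  fun t s => if s = cposF (t:ℕ) then 1 else 0

lemma key1 {k l m : ℕ} (h8 : k + l + m ≤ 8) (t w : Fin (3+k+l+m)) :
    colv k l (w:ℕ) (cposF (t:ℕ)) = if t = w then 1 else 0 := by
  have ht : (t:ℕ) < 11 := by have := t.isLt; omega
  by_cases hw : (w:ℕ) < 3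
  · rw [colv_lt hw]
    have h := entryE ⟨(w:ℕ), hw⟩ ⟨(t:ℕ), ht⟩
    rw [h]
    have e : ((t:ℕ) = (w:ℕ)) ↔ t = w := (Fin.val_inj)
    rw [if_congr e rfl rfl]
  · rw [colv_ge hw]
    have hj : (w:ℕ) - 3 < 8 := by have := w.isLt; omega
    have h := entryC ⟨axOf k l (w:ℕ), axOf_lt k l (w:ℕ)⟩ ⟨(w:ℕ) - 3, hj⟩ ⟨(t:ℕ), ht⟩
    rw [h]
    have e : ((t:ℕ) = (w:ℕ) - 3 + 3) ↔ t = w := by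
      rw [← Fin.val_inj]; omega
    rw [if_congr e rfl rfl]

lemma key2 {k l m : ℕ} (h8 : k + l + m ≤ 8) (t w : Fin (3+k+l+m)) :
    bf (colv k l (t:ℕ)) (colv k l (w:ℕ)) = MM k l m t w := by
  by_cases ht : (t:ℕ) < 3 <;> by_cases hw : (w:ℕ) < 3
  · rw [colv_lt ht, colv_lt hw]
    have h := bfEE ⟨(t:ℕ), ht⟩ ⟨(w:ℕ), hw⟩
    rw [h]
    simp only [MM]; rw [if_pos ht, if_pos hw]
    have e : ((⟨(t:ℕ), ht⟩ : Fin 3) = ⟨(w:ℕ), hw⟩) ↔ t = w := by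
      rw [Fin.ext_iff, Fin.ext_iff]
    rw [if_congr e rfl rfl]
  · rw [colv_lt ht, colv_ge hw]
    have h := bfEC ⟨(t:ℕ), ht⟩ ⟨axOf k l (w:ℕ), axOf_lt k l (w:ℕ)⟩
      ⟨(w:ℕ) - 3, by have := w.isLt; omega⟩
    rw [h]
    simp only [MM]; rw [if_pos ht, if_neg hw]
  · rw [colv_ge ht, colv_lt hw]
    have h := bfCE ⟨(w:ℕ), hw⟩ ⟨axOf k l (t:ℕ), axOf_lt k l (t:ℕ)⟩
      ⟨(t:ℕ) - 3, by have := t.isLt; omega⟩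
    rw [h]
    simp only [MM]; rw [if_neg ht, if_pos hw]
  · rw [colv_ge ht, colv_ge hw]
    have h := bfCC ⟨axOf k l (t:ℕ), axOf_lt k l (t:ℕ)⟩ ⟨axOf k l (w:ℕ), axOf_lt k l (w:ℕ)⟩
      ⟨(t:ℕ) - 3, by have := t.isLt; omega⟩ ⟨(w:ℕ) - 3, by have := w.isLt; omega⟩
    rw [h]
    simp only [MM]; rw [if_neg ht, if_neg hw]
    simp only [Fin.mk_eq_mk]
    have e : ((t:ℕ) - 3 = (w:ℕ) - 3) ↔ t = w := by
      rw [← Fin.val_inj]; omega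
    rw [if_congr e rfl rfl]

lemma hBA {k l m : ℕ} (h8 : k + l + m ≤ 8) : Bmat k l m * Amat k l m = 1 := by
  ext t w
  rw [Matrix.mul_apply]
  have step : ∀ s : Fin 22, Bmat k l m t s * Amat k l m s w
      = if s = cposF (t:ℕ) then Amat k l m s w else 0 := by
    intro s
    simp only [Bmat, ite_mul, one_mul, zero_mul]
  rw [Finset.sum_congr rfl (fun s _ => step s), Finset.sum_ite_eq' Finset.univ]
  simp only [Finset.mem_univ, if_true]
  rw [Matrix.one_apply]
  exact key1 h8 t w

set_option maxHeartbeats 1000000 in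
lemma hGram {k l m : ℕ} (h8 : k + l + m ≤ 8) :
    (Amat k l m)ᵀ * (MK3 * Amat k l m) = MM k l m := by
  ext t w
  rw [← key2 (m := m) h8 t w]
  simp only [bf, Matrix.mul_apply, Matrix.transpose_apply, dotProduct, Matrix.mulVec, Amat]

lemma sum_le_eight {k l m : ℕ} (hN : inN k l m) (hne : (k, l, m) ≠ (3, 3, 3)) :
    k + l + m ≤ 8 := by
  obtain ⟨a, b, c, hp, hc⟩ := hN
  have hsum : a + b + c = k + l + m := by
    have := congrArg Multiset.sum hp
    simp [Multiset.sum_cons] at this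
    omega
  rcases hc with h | h | h | h
  · omega
  · omega
  · omega
  · by_cases h9 : a + b + c ≤ 8
    · omega
    · have ha : a = 3 := by omega
      have hb : b = 3 := by omega
      have hcc : c = 3 := by omega
      subst ha hb hcc
      have hk : k = 3 := by
        have hm : k ∈ ({k, l, m} : Multiset ℕ) := by simp
        rw [← hp] at hm
        simpa using hm
      have hl : l = 3 := by
        have hm : l ∈ ({k, l, m} : Multiset ℕ) := by simp
        rw [← hp] at hm
        simpa using hm
      have hmm : m = 3 := by
        have hm : m ∈ ({k, l, m} : Multiset ℕ) := by simp
        rw [← hp] at hm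
        simpa using hm
      subst hk hl hmm
      exact absurd rfl hne

/-- For `(k,l,m) ∈ N` with `(k,l,m) ≠ (3,3,3)`, the lattice `L_{k,l,m}` embeds
primitively in the K3 lattice: there is an injective `ℤ`-linear map
`φ : ℤ^{3+k+l+m} → ℤ²²` respecting the bilinear forms, whose cokernel is torsion-free. -/
theorem primitive_embedding_in_K3 (k l m : ℕ) (hN : inN k l m)
    (hne : (k, l, m) ≠ (3, 3, 3)) :
    ∃ φ : (Fin (3 + k + l + m) → ℤ) →ₗ[ℤ] (Fin 22 → ℤ),
      Function.Injective φ ∧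
      (∀ u v : Fin (3 + k + l + m) → ℤ,
        φ u ⬝ᵥ MK3.mulVec (φ v) = u ⬝ᵥ (MM k l m).mulVec v) ∧
      (∀ (n : ℤ) (x : (Fin 22 → ℤ) ⧸ LinearMap.range φ),
        n ≠ 0 → n • x = 0 → x = 0) := by
  have h8 : k + l + m ≤ 8 := sum_le_eight hN hne
  have hleft : ∀ y : Fin (3+k+l+m) → ℤ,
      (Bmat k l m).mulVec ((Amat k l m).mulVec y) = y := by
    intro y
    rw [Matrix.mulVec_mulVec, hBA h8, Matrix.one_mulVec]
  refine ⟨(Amat k l m).mulVecLin, ?_, ?_, ?_⟩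
  · intro u v huv
    simp only [Matrix.mulVecLin_apply] at huv
    have := congrArg (fun z => (Bmat k l m).mulVec z) huv
    simpa only [hleft] using this
  · intro u v
    simp only [Matrix.mulVecLin_apply]
    rw [Matrix.mulVec_mulVec, Matrix.dotProduct_mulVec, ← Matrix.vecMul_transpose,
      Matrix.vecMul_vecMul, hGram h8, ← Matrix.dotProduct_mulVec]
  · intro n x hn hx
    obtain ⟨y, rfl⟩ := Submodule.Quotient.mk_surjective _ x
    rw [← Submodule.Quotient.mk_smul, Submodule.Quotient.mk_eq_zero] at hx
    obtain ⟨v, hv⟩ := hx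
    rw [Submodule.Quotient.mk_eq_zero]
    refine ⟨(Bmat k l m).mulVec y, ?_⟩
    have h1 : (Amat k l m).mulVecLin ((Bmat k l m).mulVec (n • y)) = n • y := by
      rw [← hv]
      simp only [Matrix.mulVecLin_apply]
      rw [hleft]
    have h2 : (Bmat k l m).mulVec (n • y) = n • (Bmat k l m).mulVec y :=
      Matrix.mulVec_smul _ _ _
    rw [h2, _root_.map_smul] at h1
    exact smul_right_injective (Fin 22 → ℤ) hn h1
end

section
/- Let β1,…,β22 denote the standard basis of ℤ²² and consider the nine vectors v1 = β1+2β2+β4+β6+β10+β18, v2 = β2+β3+β6, v3 = β2+β4+β5, v4 = β7, v5 = β9, v6 = β11, v7 = β15, v8 = β17, v9 = β19. Then the 9×9 Gram matrix with (i,j)-entry v_iᵀ M_{K3} v_j equals M_{6,0,0} (with index order E_x, E_y, E_z, C_{x,1},…,C_{x,6}), and the family v1,…,v9 extends to a ℤ-basis of ℤ²²; in particular the quotient ℤ²²/span_ℤ(v1,…,v9) is torsion-free. -/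
/-!
The Gram matrix is a finite computation. For the rest, each `v_i` has a pivot coordinate at
which it is `1` while every other `v_j` vanishes. Replacing the standard basis vectors at the
pivots by the `v_i` is then a unitriangular change of basis, so the `v_i` extend to a basis of
`ℤ²²`, and the span of part of a basis has torsion-free quotient, since membership is read off
the support of the coordinates.
-/

open Matrix

/-- The standard basis vector `β_t` (1-indexed, `t ∈ {1,…,22}`) of `ℤ²²`. -/
def bv (t : ℕ) : Fin 22 → ℤ := fun i => if (i : ℕ) + 1 = t then 1 else 0

/-- The nine vectors `𝓑_{6,0,0} ⊆ ℤ²²`. -/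
def v600 : Fin 9 → (Fin 22 → ℤ) :=
  ![bv 1 + 2 • bv 2 + bv 4 + bv 6 + bv 10 + bv 18,
    bv 2 + bv 3 + bv 6,
    bv 2 + bv 4 + bv 5,
    bv 7, bv 9, bv 11, bv 15, bv 17, bv 19]

section Pivots

variable {R ι κ : Type*} [CommRing R] [Fintype κ] [DecidableEq κ]
  {v : κ → ι → R} {p : κ → ι}

theorem sub_sum_pivot_smul_apply_pivot (hp : ∀ k k', v k (p k') = if k = k' then 1 else 0)
    (y : ι → R) (k : κ) : (y - ∑ k', y (p k') • v k') (p k) = 0 := by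
  simp [hp]

variable [DecidableEq ι]

variable (v p) in
def pivotCompletion : κ ⊕ {t // ∀ k, p k ≠ t} → ι → R :=
  Sum.elim v fun t => Pi.single t.1 1

variable [Fintype ι]

theorem linearIndependent_pivotCompletion
    (hp : ∀ k k', v k (p k') = if k = k' then 1 else 0) :
    LinearIndependent R (pivotCompletion v p) := by
  rw [Fintype.linearIndependent_iff]
  intro g hg
  have hcoord (t : ι) :
      ∑ k, g (.inl k) * v k t + ∑ s : {t // ∀ k, p k ≠ t}, g (.inr s) * (Pi.single s.1 1 : ι → R) t
        = 0 := by
    simpa [pivotCompletion, Fintype.sum_sum_type] using congrFun hg t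
  have hinl (k : κ) : g (.inl k) = 0 := by
    simpa [hp, Pi.single_apply, fun s : {t // ∀ k, p k ≠ t} => (s.2 k).symm] using hcoord (p k)
  rintro (k | s)
  · exact hinl k
  · simpa [hinl, Pi.single_apply, Subtype.val_inj] using hcoord s

theorem span_pivotCompletion_eq_top (hp : ∀ k k', v k (p k') = if k = k' then 1 else 0) :
    ⊤ ≤ Submodule.span R (Set.range (pivotCompletion v p)) := by
  rintro y -
  have hv : ∑ k, y (p k) • v k ∈ Submodule.span R (Set.range (pivotCompletion v p)) :=
    Submodule.sum_mem _ fun k _ => Submodule.smul_mem _ _ (Submodule.subset_span ⟨.inl k, rfl⟩)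
  have hz : y - ∑ k, y (p k) • v k ∈ Submodule.span R (Set.range (pivotCompletion v p)) := by
    rw [← Finset.univ_sum_single (y - _)]
    refine Submodule.sum_mem _ fun t _ => ?_
    by_cases ht : ∀ k, p k ≠ t
    · rw [← mul_one ((y - _) t), ← smul_eq_mul, Pi.single_smul']
      exact Submodule.smul_mem _ _ (Submodule.subset_span ⟨.inr ⟨t, ht⟩, rfl⟩)
    · obtain ⟨k, rfl⟩ := not_forall_not.mp ht
      rw [sub_sum_pivot_smul_apply_pivot hp, Pi.single_zero]
      exact zero_mem _
  simpa using add_mem hv hz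

noncomputable def pivotBasis (hp : ∀ k k', v k (p k') = if k = k' then 1 else 0) :
    Module.Basis (κ ⊕ {t // ∀ k, p k ≠ t}) R (ι → R) :=
  .mk (linearIndependent_pivotCompletion hp) (span_pivotCompletion_eq_top hp)

theorem pivotBasis_inl (hp : ∀ k k', v k (p k') = if k = k' then 1 else 0) (k : κ) :
    pivotBasis hp (.inl k) = v k :=
  Module.Basis.mk_apply _ _ _

end Pivots

theorem exists_basis_castLE_eq_of_pivots {R : Type*} [CommRing R] [Nontrivial R] {m n : ℕ}
    {v : Fin m → Fin n → R} {p : Fin m → Fin n}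
    (hp : ∀ k k', v k (p k') = if k = k' then 1 else 0) (hmn : m ≤ n) :
    ∃ b : Module.Basis (Fin n) R (Fin n → R), ∀ i, b (Fin.castLE hmn i) = v i := by
  have hp_inj : Function.Injective p := fun k k' h => by simpa [h, hp] using hp k k
  have hcard : Fintype.card {t // ∀ k, p k ≠ t} = n - m := by
    simp_rw [← not_exists]
    rw [Fintype.card_subtype_compl, Fintype.card_fin,
      Fintype.card_congr (α := {t // ∃ k, p k = t}) (Equiv.ofInjective p hp_inj).symm,
      Fintype.card_fin]
  let e : Fin m ⊕ {t // ∀ k, p k ≠ t} ≃ Fin n :=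
    ((Equiv.refl _).sumCongr (Fintype.equivFinOfCardEq hcard)).trans
      (finSumFinEquiv.trans (finCongr (Nat.add_sub_cancel' hmn)))
  refine ⟨(pivotBasis hp).reindex e, fun i => ?_⟩
  rw [Module.Basis.reindex_apply, show e.symm (Fin.castLE hmn i) = .inl i from
    e.symm_apply_eq.mpr (Fin.ext (by simp [e])), pivotBasis_inl]

theorem Module.Basis.noZeroSMulDivisors_quotient_span_image {R M ι : Type*} [CommRing R]
    [IsDomain R] [AddCommGroup M] [Module R M] (b : Module.Basis ι R M) (s : Set ι) :
    NoZeroSMulDivisors R (M ⧸ Submodule.span R (b '' s)) := by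
  refine ⟨fun {n x} hx => or_iff_not_imp_left.mpr fun hn => ?_⟩
  obtain ⟨y, rfl⟩ := Submodule.Quotient.mk_surjective _ x
  rw [← Submodule.Quotient.mk_smul, Submodule.Quotient.mk_eq_zero, b.mem_span_image] at hx
  rw [Submodule.Quotient.mk_eq_zero, b.mem_span_image]
  refine fun i hi => hx ?_
  simpa [hn] using hi

theorem gram_v600 (i j : Fin 9) : v600 i ⬝ᵥ MK3.mulVec (v600 j) = MM 6 0 0 i j := by
  fin_cases i <;> fin_cases j <;> decide

/-- The pivots are `β₁, β₃, β₅, β₇, β₉, β₁₁, β₁₅, β₁₇, β₁₉`, here 0-indexed. -/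
theorem v600_pivot (k k' : Fin 9) :
    v600 k (![0, 2, 4, 6, 8, 10, 14, 16, 18] k') = if k = k' then 1 else 0 := by
  fin_cases k <;> fin_cases k' <;> decide

/-- The Gram matrix of the nine vectors in `𝓑_{6,0,0}` with respect to `M_{K3}` is
`M_{6,0,0}`, the family extends to a `ℤ`-basis of `ℤ²²`, and the quotient of `ℤ²²`
by its span is torsion-free. -/
theorem B600_primitive :
    (∀ i j : Fin 9, v600 i ⬝ᵥ MK3.mulVec (v600 j) = MM 6 0 0 i j) ∧
    (∃ b : Module.Basis (Fin 22) ℤ (Fin 22 → ℤ),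
      ∀ i : Fin 9, b (Fin.castLE (by norm_num) i) = v600 i) ∧
    (∀ (n : ℤ) (x : (Fin 22 → ℤ) ⧸ Submodule.span ℤ (Set.range v600)),
      n ≠ 0 → n • x = 0 → x = 0) := by
  obtain ⟨b, hb⟩ := exists_basis_castLE_eq_of_pivots v600_pivot (by norm_num : 9 ≤ 22)
  have hspan : Set.range v600 = b '' Set.range (Fin.castLE (by norm_num : 9 ≤ 22)) := by
    rw [← Set.range_comp]
    exact congrArg Set.range (funext fun i => (hb i).symm)
  refine ⟨gram_v600, ⟨b, hb⟩, fun n x hn hx => ?_⟩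
  have : NoZeroSMulDivisors ℤ ((Fin 22 → ℤ) ⧸ Submodule.span ℤ (Set.range v600)) :=
    hspan ▸ b.noZeroSMulDivisors_quotient_span_image _
  exact (smul_eq_zero.mp hx).resolve_left hn
end

section
/- Let β1,…,β22 denote the standard basis of ℤ²² and consider the eleven vectors v1 = β1+β2+β4+β6+β10, v2 = β2+β3+β4+β6+β18, v3 = β2+β4+β5+2β6+β13+β21, v4 = β7, v5 = β9, v6 = β11, v7 = β15, v8 = β17, v9 = β19, v10 = β14, v11 = β22. Then the 11×11 Gram matrix with (i,j)-entry v_iᵀ M_{K3} v_j equals M_{3,3,2} (with index order E_x, E_y, E_z, C_{x,1}, C_{x,2}, C_{x,3}, C_{y,1}, C_{y,2}, C_{y,3}, C_{z,1}, C_{z,2}), and the family v1,…,v11 extends to a ℤ-basis of ℤ²²; in particular the quotient ℤ²²/span_ℤ(v1,…,v11) is torsion-free. -/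
open Matrix

/-- The eleven vectors `𝓑_{3,3,2} ⊆ ℤ²²`. -/
def v332 : Fin 11 → (Fin 22 → ℤ) :=
  ![bv 1 + bv 2 + bv 4 + bv 6 + bv 10,
    bv 2 + bv 3 + bv 4 + bv 6 + bv 18,
    bv 2 + bv 4 + bv 5 + 2 • bv 6 + bv 13 + bv 21,
    bv 7, bv 9, bv 11, bv 15, bv 17, bv 19, bv 14, bv 22]

/-! The completed family `v332Completed` (the `vᵢ` followed by eleven standard basis vectors)
is the standard basis, permuted by `v332Pivot`, plus a perturbation `N` with `N² = 0`:
`v₁, v₂, v₃` carry the coefficient `1` at `β₁₀, β₁₈, β₁₃`, coordinates that no other vector of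
the family involves, and every other vector is itself a standard basis vector. Hence the change
of basis `1 + N` is invertible, and the quotient of `ℤ²²` by the span of part of a basis is
isomorphic to the span of the remaining basis vectors, so it is torsion-free. -/

namespace Module.Basis

open Submodule

variable {ι R M : Type*} [AddCommGroup M]

theorem exists_basis_coe_eq_of_sub_mem_span_image [CommRing R] [Module R M]
    (b : Basis ι R M) (s : Set ι) (f : ι → M) (hs : ∀ i ∈ s, f i = b i)
    (hf : ∀ i, f i - b i ∈ span R (b '' s)) : ∃ b' : Basis ι R M, ⇑b' = f := by
  let N : Module.End R M := b.constr R fun i => f i - b i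
  have hN : ∀ i, N (b i) = f i - b i := b.constr_basis R _
  have hker : span R (b '' s) ≤ LinearMap.ker N :=
    span_le.mpr <| Set.image_subset_iff.mpr fun i hi => by simp [hN, hs i hi]
  have hnil : IsNilpotent N := ⟨2, b.ext fun i => by simpa [pow_two, hN] using hker (hf i)⟩
  have hbij := (Module.End.isUnit_iff _).mp hnil.isUnit_one_add
  refine ⟨b.map (LinearEquiv.ofBijective _ hbij), funext fun i => ?_⟩
  simp [hN]

theorem isTorsionFree_quotient_span_image [Ring R] [Module R M] [Module.IsTorsionFree R M]
    (b : Basis ι R M) (s : Set ι) : Module.IsTorsionFree R (M ⧸ span R (b '' s)) := by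
  let e := quotientEquivOfIsCompl _ _
    (b.linearIndependent.isCompl_span_image b.span_eq (isCompl_compl (x := s)))
  exact Function.Injective.moduleIsTorsionFree (Submodule.subtype _ ∘ e)
    (Subtype.val_injective.comp e.injective) fun r m => by simp

end Module.Basis

theorem v332_gram : ∀ i j : Fin 11, v332 i ⬝ᵥ MK3 *ᵥ v332 j = MM 3 3 2 i j := by
  -- the `Fin (3 + 3 + 3 + 2)` indexing of `MM` hides the `Decidable` instance until unfolded
  unfold MM
  decide

def v332Completed : Fin 22 → Fin 22 → ℤ :=
  Fin.append v332 ![bv 1, bv 2, bv 3, bv 4, bv 5, bv 6, bv 8, bv 12, bv 16, bv 20, bv 21]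

/-- The coordinate at which `v332Completed i` has its leading coefficient `1`. -/
noncomputable def v332Pivot : Fin 22 ≃ Fin 22 :=
  Equiv.ofBijective ![9, 17, 12, 6, 8, 10, 14, 16, 18, 13, 21, 0, 1, 2, 3, 4, 5, 7, 11, 15, 19, 20]
    (Finite.injective_iff_bijective.mp (by decide))

theorem v332Completed_apply_of_three_le : ∀ i j : Fin 22, 3 ≤ (i : ℕ) →
    v332Completed i j = (Pi.single (v332Pivot i) 1 : Fin 22 → ℤ) j := by
  decide

theorem v332Completed_apply_pivot_of_lt_three : ∀ i j : Fin 22, (j : ℕ) < 3 →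
    v332Completed i (v332Pivot j) = if i = j then 1 else 0 := by
  decide

theorem exists_basis_extending_v332 : ∃ b : Module.Basis (Fin 22) ℤ (Fin 22 → ℤ),
    ∀ i : Fin 11, b (Fin.castLE (by norm_num) i) = v332 i := by
  let e := (Pi.basisFun ℤ (Fin 22)).reindex v332Pivot.symm
  have he : ∀ i, e i = Pi.single (v332Pivot i) 1 := by simp [e]
  obtain ⟨b, hb⟩ := e.exists_basis_coe_eq_of_sub_mem_span_image {i | 3 ≤ (i : ℕ)} v332Completed
    (fun i hi => funext fun j => by rw [he]; exact v332Completed_apply_of_three_le i j hi)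
    fun i => by
      rw [e.mem_span_image]
      intro j hj
      by_contra hj3
      refine Finsupp.mem_support_iff.mp hj ?_
      simp [e, he, Pi.single_apply, eq_comm,
        v332Completed_apply_pivot_of_lt_three i j (not_le.mp hj3)]
  exact ⟨b, fun i => by rw [hb]; exact Fin.append_left _ _ i⟩

/-- The Gram matrix of the eleven vectors in `𝓑_{3,3,2}` with respect to `M_{K3}` is
`M_{3,3,2}`, the family extends to a `ℤ`-basis of `ℤ²²`, and the quotient of `ℤ²²`
by its span is torsion-free. -/
theorem B332_primitive :
    (∀ i j : Fin 11, v332 i ⬝ᵥ MK3.mulVec (v332 j) = MM 3 3 2 i j) ∧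
    (∃ b : Module.Basis (Fin 22) ℤ (Fin 22 → ℤ),
      ∀ i : Fin 11, b (Fin.castLE (by norm_num) i) = v332 i) ∧
    (∀ (n : ℤ) (x : (Fin 22 → ℤ) ⧸ Submodule.span ℤ (Set.range v332)),
      n ≠ 0 → n • x = 0 → x = 0) := by
  obtain ⟨b, hb⟩ := exists_basis_extending_v332
  have hrange : b '' Set.range (Fin.castLE (by norm_num : 11 ≤ 22)) = Set.range v332 := by
    rw [← Set.range_comp]
    exact congrArg Set.range (funext hb)
  have htf := b.isTorsionFree_quotient_span_image (Set.range (Fin.castLE (by norm_num : 11 ≤ 22)))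
  rw [hrange] at htf
  exact ⟨v332_gram, ⟨b, hb⟩, fun n x hn hx => (smul_eq_zero_iff_right hn).mp hx⟩
end

section
/- For all nonnegative integers k, l, m, each of the matrices T_x, T_y, T_z is an involutive isometry of the bilinear form given by M_{k,l,m}: that is, T_ω² equals the identity matrix and T_ωᵀ M_{k,l,m} T_ω = M_{k,l,m} for each ω ∈ {x,y,z}. -/
open Matrix

/-- The matrix of `T_x` in the basis
`E_x, E_y, E_z, C_{x,1},…,C_{x,k}, C_{y,1},…,C_{y,l}, C_{z,1},…,C_{z,m}`:
`T_x` fixes `E_y`, `E_z` and each `C_{x,i}`, sends `C_{y,i} ↦ E_z − C_{y,i}`,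
`C_{z,i} ↦ E_y − C_{z,i}`, and `E_x ↦ −E_x + 2E_y + 2E_z − (C_{x,1}+…+C_{x,k})`. -/
def Tx (k l m : ℕ) : Matrix (Fin (3 + k + l + m)) (Fin (3 + k + l + m)) ℤ :=
  fun i j =>
    if (j : ℕ) = 0 then
      if (i : ℕ) = 0 then -1
      else if (i : ℕ) < 3 then 2
      else if axOf k l i = 0 then -1 else 0
    else if (j : ℕ) < 3 then (if i = j then 1 else 0)
    else if axOf k l j = 0 then (if i = j then 1 else 0)
    else if axOf k l j = 1 then (if (i : ℕ) = 2 then 1 else if i = j then -1 else 0)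
    else (if (i : ℕ) = 1 then 1 else if i = j then -1 else 0)

/-- The matrix of `T_y`: it fixes `E_x`, `E_z` and each `C_{y,i}`, sends
`C_{x,i} ↦ E_z − C_{x,i}`, `C_{z,i} ↦ E_x − C_{z,i}`, and
`E_y ↦ 2E_x − E_y + 2E_z − (C_{y,1}+…+C_{y,l})`. -/
def Ty (k l m : ℕ) : Matrix (Fin (3 + k + l + m)) (Fin (3 + k + l + m)) ℤ :=
  fun i j =>
    if (j : ℕ) = 1 then
      if (i : ℕ) = 1 then -1
      else if (i : ℕ) < 3 then 2
      else if axOf k l i = 1 then -1 else 0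
    else if (j : ℕ) < 3 then (if i = j then 1 else 0)
    else if axOf k l j = 1 then (if i = j then 1 else 0)
    else if axOf k l j = 0 then (if (i : ℕ) = 2 then 1 else if i = j then -1 else 0)
    else (if (i : ℕ) = 0 then 1 else if i = j then -1 else 0)

/-- The matrix of `T_z`: it fixes `E_x`, `E_y` and each `C_{z,i}`, sends
`C_{x,i} ↦ E_y − C_{x,i}`, `C_{y,i} ↦ E_x − C_{y,i}`, and
`E_z ↦ 2E_x + 2E_y − E_z − (C_{z,1}+…+C_{z,m})`. -/
def Tz (k l m : ℕ) : Matrix (Fin (3 + k + l + m)) (Fin (3 + k + l + m)) ℤ :=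
  fun i j =>
    if (j : ℕ) = 2 then
      if (i : ℕ) = 2 then -1
      else if (i : ℕ) < 3 then 2
      else if axOf k l i = 2 then -1 else 0
    else if (j : ℕ) < 3 then (if i = j then 1 else 0)
    else if axOf k l j = 2 then (if i = j then 1 else 0)
    else if axOf k l j = 0 then (if (i : ℕ) = 1 then 1 else if i = j then -1 else 0)
    else (if (i : ℕ) = 0 then 1 else if i = j then -1 else 0)


/-- Class (0..5) of a basis index: `0,1,2` for `E_x,E_y,E_z` and
`3,4,5` for the curve classes `C_x, C_y, C_z`. -/
def cl (k l t : ℕ) : ℕ := if t < 3 then t else 3 + axOf k l t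

lemma cl_lt_six (k l t : ℕ) : cl k l t < 6 := by
  unfold cl axOf; split_ifs <;> omega

lemma sum_cl (k l m : ℕ) (h : ℕ → ℤ) :
    ∑ t : Fin (3 + k + l + m), h (cl k l (t : ℕ)) =
      h 0 + h 1 + h 2 + (k : ℤ) * h 3 + (l : ℤ) * h 4 + (m : ℤ) * h 5 := by
  rw [Fin.sum_univ_add, Fin.sum_univ_add, Fin.sum_univ_add, Fin.sum_univ_three]
  simp only [Fin.coe_castAdd, Fin.coe_natAdd]
  have e0 : cl k l ((0 : Fin 3) : ℕ) = 0 := by simp [cl]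
  have e1 : cl k l ((1 : Fin 3) : ℕ) = 1 := by simp [cl]
  have e2 : cl k l ((2 : Fin 3) : ℕ) = 2 := by simp [cl]
  have ek : ∀ i : Fin k, cl k l (3 + (i : ℕ)) = 3 := by
    intro i; have hi := i.isLt; unfold cl axOf; split_ifs <;> omega
  have el : ∀ i : Fin l, cl k l (3 + k + (i : ℕ)) = 4 := by
    intro i; have hi := i.isLt; unfold cl axOf; split_ifs <;> omega
  have em : ∀ i : Fin m, cl k l (3 + k + l + (i : ℕ)) = 5 := by
    intro i; have hi := i.isLt; unfold cl axOf; split_ifs <;> omega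
  rw [e0, e1, e2]
  simp only [ek, el, em]
  simp [Finset.sum_const, Finset.card_univ, nsmul_eq_mul]

/-- A matrix is *structured* if its entries depend only on the classes of the
indices, plus a diagonal correction depending on the class. -/
def SRep (k l m : ℕ) (A : Matrix (Fin (3 + k + l + m)) (Fin (3 + k + l + m)) ℤ)
    (f : ℕ → ℕ → ℤ) (d : ℕ → ℤ) : Prop :=
  ∀ i j : Fin (3 + k + l + m),
    A i j = f (cl k l (i : ℕ)) (cl k l (j : ℕ)) + if i = j then d (cl k l (i : ℕ)) else 0

lemma SRep.mul {k l m : ℕ} {A B : Matrix (Fin (3 + k + l + m)) (Fin (3 + k + l + m)) ℤ}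
    {fA fB : ℕ → ℕ → ℤ} {dA dB : ℕ → ℤ}
    (hA : SRep k l m A fA dA) (hB : SRep k l m B fB dB) :
    SRep k l m (A * B)
      (fun a b => fA a 0 * fB 0 b + fA a 1 * fB 1 b + fA a 2 * fB 2 b
        + (k : ℤ) * (fA a 3 * fB 3 b) + (l : ℤ) * (fA a 4 * fB 4 b)
        + (m : ℤ) * (fA a 5 * fB 5 b) + fA a b * dB b + dA a * fB a b)
      (fun a => dA a * dB a) := by
  intro i j
  rw [Matrix.mul_apply]
  have expand : ∀ t : Fin (3 + k + l + m), A i t * B t j =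
      fA (cl k l (i : ℕ)) (cl k l (t : ℕ)) * fB (cl k l (t : ℕ)) (cl k l (j : ℕ))
      + ((if t = j then fA (cl k l (i : ℕ)) (cl k l (t : ℕ)) * dB (cl k l (t : ℕ)) else 0)
      + ((if i = t then dA (cl k l (i : ℕ)) * fB (cl k l (t : ℕ)) (cl k l (j : ℕ)) else 0)
      + (if i = t then (if t = j then dA (cl k l (i : ℕ)) * dB (cl k l (t : ℕ)) else 0) else 0))) := by
    intro t
    rw [hA, hB]
    split_ifs <;> ring
  rw [Finset.sum_congr rfl (fun t _ => expand t), Finset.sum_add_distrib,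
    Finset.sum_add_distrib, Finset.sum_add_distrib,
    sum_cl k l m (fun s => fA (cl k l (i : ℕ)) s * fB s (cl k l (j : ℕ))),
    Finset.sum_ite_eq' Finset.univ j
      (fun t => fA (cl k l (i : ℕ)) (cl k l (t : ℕ)) * dB (cl k l (t : ℕ))),
    Finset.sum_ite_eq Finset.univ i
      (fun t => dA (cl k l (i : ℕ)) * fB (cl k l (t : ℕ)) (cl k l (j : ℕ))),
    Finset.sum_ite_eq Finset.univ i
      (fun t => if t = j then dA (cl k l (i : ℕ)) * dB (cl k l (t : ℕ)) else 0)]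
  simp only [Finset.mem_univ, if_true]
  by_cases h : i = j
  · subst h; simp only [if_pos rfl]; ring
  · simp only [if_neg h]; ring

lemma SRep.transpose {k l m : ℕ} {A : Matrix (Fin (3 + k + l + m)) (Fin (3 + k + l + m)) ℤ}
    {f : ℕ → ℕ → ℤ} {d : ℕ → ℤ} (hA : SRep k l m A f d) :
    SRep k l m Aᵀ (fun a b => f b a) d := by
  intro i j
  rw [Matrix.transpose_apply, hA j i]
  by_cases h : i = j
  · subst h; simp
  · simp [h, Ne.symm h]

lemma SRep.ext {k l m : ℕ} {A B : Matrix (Fin (3 + k + l + m)) (Fin (3 + k + l + m)) ℤ}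
    {fA fB : ℕ → ℕ → ℤ} {dA dB : ℕ → ℤ}
    (hA : SRep k l m A fA dA) (hB : SRep k l m B fB dB)
    (hf : ∀ a b, a < 6 → b < 6 → fA a b = fB a b)
    (hd : ∀ a, a < 6 → dA a = dB a) : A = B := by
  ext i j
  rw [hA, hB, hf _ _ (cl_lt_six k l i) (cl_lt_six k l j), hd _ (cl_lt_six k l i)]

def fTx : ℕ → ℕ → ℤ := fun a b =>
  if b = 0 then (if a = 0 then 0 else if a = 1 then 2 else if a = 2 then 2
    else if a = 3 then -1 else 0)
  else if b = 4 then (if a = 2 then 1 else 0)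
  else if b = 5 then (if a = 1 then 1 else 0)
  else 0

def dTx : ℕ → ℤ := fun a => if a = 0 then -1 else if a = 4 then -1 else if a = 5 then -1 else 1

def fTy : ℕ → ℕ → ℤ := fun a b =>
  if b = 1 then (if a = 0 then 2 else if a = 1 then 0 else if a = 2 then 2
    else if a = 4 then -1 else 0)
  else if b = 3 then (if a = 2 then 1 else 0)
  else if b = 5 then (if a = 0 then 1 else 0)
  else 0

def dTy : ℕ → ℤ := fun a => if a = 1 then -1 else if a = 3 then -1 else if a = 5 then -1 else 1

def fTz : ℕ → ℕ → ℤ := fun a b =>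
  if b = 2 then (if a = 0 then 2 else if a = 1 then 2 else if a = 2 then 0
    else if a = 5 then -1 else 0)
  else if b = 3 then (if a = 1 then 1 else 0)
  else if b = 4 then (if a = 0 then 1 else 0)
  else 0

def dTz : ℕ → ℤ := fun a => if a = 2 then -1 else if a = 3 then -1 else if a = 4 then -1 else 1

def fMM : ℕ → ℕ → ℤ := fun a b =>
  if a = 0 then (if b = 0 then 0 else if b = 1 then 2 else if b = 2 then 2
    else if b = 3 then 1 else 0)
  else if a = 1 then (if b = 1 then 0 else if b = 0 then 2 else if b = 2 then 2
    else if b = 4 then 1 else 0)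
  else if a = 2 then (if b = 2 then 0 else if b = 0 then 2 else if b = 1 then 2
    else if b = 5 then 1 else 0)
  else if b = 0 then (if a = 3 then 1 else 0)
  else if b = 1 then (if a = 4 then 1 else 0)
  else if b = 2 then (if a = 5 then 1 else 0)
  else 0

def dMM : ℕ → ℤ := fun a => if a < 3 then 0 else -2

lemma ax0 (k l t : ℕ) : axOf k l t = 0 ↔ t < 3 + k := by
  unfold axOf; split_ifs <;> (try simp only [false_iff, iff_false, true_iff, iff_true]) <;> omega
lemma ax1 (k l t : ℕ) : axOf k l t = 1 ↔ 3 + k ≤ t ∧ t < 3 + k + l := by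
  unfold axOf; split_ifs <;> (try simp only [false_iff, iff_false, true_iff, iff_true]) <;> omega
lemma ax2 (k l t : ℕ) : axOf k l t = 2 ↔ 3 + k + l ≤ t := by
  unfold axOf; split_ifs <;> (try simp only [false_iff, iff_false, true_iff, iff_true]) <;> omega
lemma cl0 (k l t : ℕ) : cl k l t = 0 ↔ t = 0 := by
  unfold cl axOf; split_ifs <;> (try simp only [false_iff, iff_false, true_iff, iff_true]) <;> omega
lemma cl1 (k l t : ℕ) : cl k l t = 1 ↔ t = 1 := by
  unfold cl axOf; split_ifs <;> (try simp only [false_iff, iff_false, true_iff, iff_true]) <;> omega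
lemma cl2 (k l t : ℕ) : cl k l t = 2 ↔ t = 2 := by
  unfold cl axOf; split_ifs <;> (try simp only [false_iff, iff_false, true_iff, iff_true]) <;> omega
lemma cl3 (k l t : ℕ) : cl k l t = 3 ↔ 3 ≤ t ∧ t < 3 + k := by
  unfold cl axOf; split_ifs <;> (try simp only [false_iff, iff_false, true_iff, iff_true]) <;> omega
lemma cl4 (k l t : ℕ) : cl k l t = 4 ↔ 3 + k ≤ t ∧ t < 3 + k + l := by
  unfold cl axOf; split_ifs <;> (try simp only [false_iff, iff_false, true_iff, iff_true]) <;> omega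
lemma cl5 (k l t : ℕ) : cl k l t = 5 ↔ 3 + k + l ≤ t := by
  unfold cl axOf; split_ifs <;> (try simp only [false_iff, iff_false, true_iff, iff_true]) <;> omega

lemma cl_lt3 (k l t : ℕ) : cl k l t < 3 ↔ t < 3 := by
  unfold cl axOf; split_ifs <;> (try simp only [false_iff, iff_false, true_iff, iff_true]) <;> omega
lemma ax_eq (k l s t : ℕ) : (t = axOf k l s) ↔
    ((t = 0 ∧ s < 3 + k) ∨ (t = 1 ∧ (3 + k ≤ s ∧ s < 3 + k + l)) ∨ (t = 2 ∧ 3 + k + l ≤ s)) := by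
  unfold axOf; split_ifs <;> (try simp only [false_iff, iff_false, true_iff, iff_true]) <;> omega

set_option maxHeartbeats 1000000 in
lemma rep_Tx (k l m : ℕ) : SRep k l m (Tx k l m) fTx dTx := by
  intro i j
  simp only [Tx, fTx, dTx, ax0, ax1, ax2, cl0, cl1, cl2, cl3, cl4, cl5, Fin.ext_iff]
  split_ifs <;> first | omega | exact (by assumption : False).elim

set_option maxHeartbeats 1000000 in
lemma rep_Ty (k l m : ℕ) : SRep k l m (Ty k l m) fTy dTy := by
  intro i j
  simp only [Ty, fTy, dTy, ax0, ax1, ax2, cl0, cl1, cl2, cl3, cl4, cl5, Fin.ext_iff]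
  split_ifs <;> first | omega | exact (by assumption : False).elim

set_option maxHeartbeats 1000000 in
lemma rep_Tz (k l m : ℕ) : SRep k l m (Tz k l m) fTz dTz := by
  intro i j
  simp only [Tz, fTz, dTz, ax0, ax1, ax2, cl0, cl1, cl2, cl3, cl4, cl5, Fin.ext_iff]
  split_ifs <;> first | omega | exact (by assumption : False).elim

set_option maxHeartbeats 1000000 in
lemma rep_MM (k l m : ℕ) : SRep k l m (MM k l m) fMM dMM := by
  intro i j
  simp only [MM, fMM, dMM, cl_lt3, ax_eq, ax0, ax1, ax2, cl0, cl1, cl2, cl3, cl4, cl5, Fin.ext_iff]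
  split_ifs <;> first | omega | exact (by assumption : False).elim

lemma rep_one (k l m : ℕ) : SRep k l m 1 (fun _ _ => 0) (fun _ => 1) := by
  intro i j
  rw [Matrix.one_apply]
  by_cases h : i = j <;> simp [h]

set_option maxHeartbeats 2000000 in
/-- Each of `T_x`, `T_y`, `T_z` is an involutive isometry of the bilinear form
given by `M_{k,l,m}`. -/
theorem T_involutive_isometry (k l m : ℕ) :
    (Tx k l m * Tx k l m = 1 ∧ (Tx k l m)ᵀ * MM k l m * Tx k l m = MM k l m) ∧
    (Ty k l m * Ty k l m = 1 ∧ (Ty k l m)ᵀ * MM k l m * Ty k l m = MM k l m) ∧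
    (Tz k l m * Tz k l m = 1 ∧ (Tz k l m)ᵀ * MM k l m * Tz k l m = MM k l m) := by
  refine ⟨⟨?_, ?_⟩, ⟨?_, ?_⟩, ⟨?_, ?_⟩⟩
  · exact SRep.ext ((rep_Tx k l m).mul (rep_Tx k l m)) (rep_one k l m)
      (by intro a b ha hb; interval_cases a <;> interval_cases b <;>
        first | (simp [fTx, dTx]; try ring) | ring)
      (by intro a ha; interval_cases a <;> simp [dTx])
  · exact SRep.ext (((rep_Tx k l m).transpose.mul (rep_MM k l m)).mul (rep_Tx k l m)) (rep_MM k l m)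
      (by intro a b ha hb; interval_cases a <;> interval_cases b <;>
        first | (simp [fTx, dTx, fMM, dMM]; try ring) | ring)
      (by intro a ha; interval_cases a <;> simp [dTx, dMM])
  · exact SRep.ext ((rep_Ty k l m).mul (rep_Ty k l m)) (rep_one k l m)
      (by intro a b ha hb; interval_cases a <;> interval_cases b <;>
        first | (simp [fTy, dTy]; try ring) | ring)
      (by intro a ha; interval_cases a <;> simp [dTy])
  · exact SRep.ext (((rep_Ty k l m).transpose.mul (rep_MM k l m)).mul (rep_Ty k l m)) (rep_MM k l m)
      (by intro a b ha hb; interval_cases a <;> interval_cases b <;>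
        first | (simp [fTy, dTy, fMM, dMM]; try ring) | ring)
      (by intro a ha; interval_cases a <;> simp [dTy, dMM])
  · exact SRep.ext ((rep_Tz k l m).mul (rep_Tz k l m)) (rep_one k l m)
      (by intro a b ha hb; interval_cases a <;> interval_cases b <;>
        first | (simp [fTz, dTz]; try ring) | ring)
      (by intro a ha; interval_cases a <;> simp [dTz])
  · exact SRep.ext (((rep_Tz k l m).transpose.mul (rep_MM k l m)).mul (rep_Tz k l m)) (rep_MM k l m)
      (by intro a b ha hb; interval_cases a <;> interval_cases b <;>
        first | (simp [fTz, dTz, fMM, dMM]; try ring) | ring)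
      (by intro a ha; interval_cases a <;> simp [dTz, dMM])
end

section
/- For each integer k with 0 ≤ k ≤ 6, the spectral radius of the (3+k)×(3+k) integer matrix F_{k,0,0} equals (9−k) + √((9−k)² − 1); that is, (9−k) + √((9−k)² − 1) is a root of the characteristic polynomial of F_{k,0,0}, and every complex root of the characteristic polynomial has modulus at most (9−k) + √((9−k)² − 1). (In particular this value is the larger root of t² − 2(9−k)t + 1 = 0.) -/
open Matrix

/-- The matrix of `F = T_z ∘ T_y ∘ T_x`. -/
def Fm (k l m : ℕ) : Matrix (Fin (3 + k + l + m)) (Fin (3 + k + l + m)) ℤ :=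
  Tz k l m * Ty k l m * Tx k l m

/-- The characteristic polynomial (over `ℂ`) of the integer matrix `F_{k,l,m}`. -/
noncomputable def cpF (k l m : ℕ) : Polynomial ℂ :=
  Matrix.charpoly ((Fm k l m).map (fun x => (x : ℂ)))

/-!
For `k ≤ 6` the matrix `F = F_{k,0,0}` is annihilated by `(X - 1)(X + 1)(X² - 2cX + 1)` with
`c = 9 - k ≥ 3`, an identity of integer matrices checked by computation. Hence every eigenvalue
of `F` is `±1` or one of the real numbers `c ± √(c² - 1)`, all of modulus at most
`ρ = c + √(c² - 1)`. Conversely `F` maps the integer vectors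
`a = 2E_x - 3E_y - 5E_z + 2 ∑ C_{x,i}` and `b = -2E_x - E_y + E_z` to `-b` and `a + 2cb`, so on
`span {a, b}` it acts as the companion matrix of `X² - 2cX + 1`, and `a + ρb` is an eigenvector
with eigenvalue `ρ`.
-/
open Polynomial

namespace Matrix

variable {n : Type*} [Fintype n]

theorem map_mulVec_add_smul_eq_smul {R S : Type*} [CommRing R] [CommRing S] (f : R →+* S)
    {A : Matrix n n R} {a b : n → R} {s : R} {r : S} (ha : A *ᵥ a = -b)
    (hb : A *ᵥ b = a + s • b) (hr : r ^ 2 = f s * r - 1) :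
    A.map f *ᵥ (f ∘ a + r • f ∘ b) = r • (f ∘ a + r • f ∘ b) := by
  have hmap (v : n → R) : A.map f *ᵥ (f ∘ v) = f ∘ (A *ᵥ v) :=
    funext fun i => (f.map_mulVec A v i).symm
  ext i
  have ha' := congrFun (hmap a) i
  have hb' := congrFun (hmap b) i
  rw [ha] at ha'
  rw [hb] at hb'
  simp only [mulVec_add, mulVec_smul, Pi.add_apply, Pi.smul_apply, Pi.neg_apply,
    Function.comp_apply, smul_eq_mul, map_add, map_neg, map_mul] at ha' hb' ⊢
  rw [ha', hb']
  linear_combination -(f (b i)) * hr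

variable [DecidableEq n]

theorem isRoot_charpoly_of_mulVec_eq_smul {K : Type*} [Field K] {A : Matrix n n K} {μ : K}
    {v : n → K} (hv : v ≠ 0) (h : A *ᵥ v = μ • v) : A.charpoly.IsRoot μ := by
  rw [← mem_spectrum_iff_isRoot_charpoly, ← spectrum_toLin']
  exact Module.End.HasEigenvalue.mem_spectrum
    (Module.End.hasEigenvalue_of_hasEigenvector ⟨Module.End.mem_eigenspace_iff.mpr h, hv⟩)

theorem isRoot_of_isRoot_charpoly_of_aeval_eq_zero {K : Type*} [Field K] [Nonempty n]
    {A : Matrix n n K} {p : K[X]} (hp : aeval A p = 0) {μ : K} (hμ : A.charpoly.IsRoot μ) :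
    p.IsRoot μ := by
  have := spectrum.subset_polynomial_aeval A p ⟨μ, mem_spectrum_iff_isRoot_charpoly.mpr hμ, rfl⟩
  rwa [hp, spectrum.zero_eq, Set.mem_singleton_iff] at this

theorem aeval_map_map {R S : Type*} [CommRing R] [CommRing S] (f : R →+* S) (A : Matrix n n R)
    (q : R[X]) : aeval (A.map f) (q.map f) = f.mapMatrix (aeval A q) := by
  rw [aeval_def, aeval_def, eval₂_map, hom_eval₂]
  congr 1
  ext c i j
  simp [algebraMap_matrix_apply, apply_ite f]

end Matrix

theorem add_sqrt_sq_sub_one_sq {c : ℝ} (hc : 1 ≤ c) :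
    (c + √(c ^ 2 - 1)) ^ 2 = 2 * c * (c + √(c ^ 2 - 1)) - 1 := by
  have := Real.sq_sqrt (show 0 ≤ c ^ 2 - 1 by nlinarith)
  linear_combination this

theorem norm_le_of_sq_sub_two_mul_add_one_eq_zero {c : ℝ} (hc : 1 ≤ c) {z : ℂ}
    (hz : z ^ 2 - 2 * c * z + 1 = 0) : ‖z‖ ≤ c + √(c ^ 2 - 1) := by
  set q := √(c ^ 2 - 1)
  have hq0 : 0 ≤ q := Real.sqrt_nonneg _
  have hq : (q : ℂ) ^ 2 = c ^ 2 - 1 := by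
    exact_mod_cast Real.sq_sqrt (show 0 ≤ c ^ 2 - 1 by nlinarith)
  have hroots : (z - (c + q : ℝ)) * (z - (c - q : ℝ)) = 0 := by
    push_cast
    linear_combination hz - hq
  have hqc : q ≤ c := Real.sqrt_le_iff.mpr ⟨by linarith, by nlinarith⟩
  rcases mul_eq_zero.mp hroots with h | h
  · rw [sub_eq_zero.mp h, Complex.norm_real, Real.norm_of_nonneg (by linarith)]
  · rw [sub_eq_zero.mp h, Complex.norm_real, Real.norm_of_nonneg (by linarith)]
    linarith

theorem norm_le_of_mul_sq_sub_two_mul_add_one_eq_zero {c : ℝ} (hc : 1 ≤ c) {z : ℂ}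
    (hz : (z - 1) * (z + 1) * (z ^ 2 - 2 * c * z + 1) = 0) : ‖z‖ ≤ c + √(c ^ 2 - 1) := by
  rcases mul_eq_zero.mp hz with h | h
  · have : ‖z‖ = 1 := by
      rcases mul_eq_zero.mp h with h | h
      · simp [sub_eq_zero.mp h]
      · simp [eq_neg_of_add_eq_zero_left h]
    linarith [Real.sqrt_nonneg (c ^ 2 - 1)]
  · exact norm_le_of_sq_sub_two_mul_add_one_eq_zero hc h

def perronVecA (k : ℕ) : Fin (3 + k + 0 + 0) → ℤ :=
  fun i => if (i : ℕ) = 1 then -3 else if (i : ℕ) = 2 then -5 else 2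

def perronVecB (k : ℕ) : Fin (3 + k + 0 + 0) → ℤ :=
  fun i => if (i : ℕ) = 0 then -2 else if (i : ℕ) = 1 then -1 else if (i : ℕ) = 2 then 1 else 0

noncomputable def annihPoly (d : ℤ) : ℤ[X] := (X - 1) * (X + 1) * (X ^ 2 - C (2 * d) * X + 1)

section Fk00

variable {k : ℕ}

theorem Fm_mulVec_perronVecA (hk : k ≤ 6) : Fm k 0 0 *ᵥ perronVecA k = -perronVecB k := by
  interval_cases k <;> decide

theorem Fm_mulVec_perronVecB (hk : k ≤ 6) :
    Fm k 0 0 *ᵥ perronVecB k = perronVecA k + (2 * (9 - k : ℤ)) • perronVecB k := by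
  interval_cases k <;> decide

theorem aeval_Fm_annihPoly (hk : k ≤ 6) : aeval (Fm k 0 0) (annihPoly (9 - k)) = 0 := by
  simp only [annihPoly, map_mul, map_sub, map_add, map_pow, map_one, aeval_X, aeval_C,
    Algebra.algebraMap_eq_smul_one, smul_mul_assoc, one_mul]
  interval_cases k <;> decide

theorem cpF_eq_charpoly_map (l m : ℕ) :
    cpF k l m = ((Fm k l m).map (Int.castRingHom ℂ)).charpoly := rfl

theorem isRoot_cpF_add_sqrt (hk : k ≤ 6) :
    (cpF k 0 0).IsRoot (((9 - k : ℝ) + √((9 - k : ℝ) ^ 2 - 1) : ℝ) : ℂ) := by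
  set c : ℝ := 9 - k
  have hc : 3 ≤ c := by simp only [c]; linarith [show (k : ℝ) ≤ 6 by exact_mod_cast hk]
  set ρ := c + √(c ^ 2 - 1)
  have hρ : (ρ : ℂ) ^ 2 = (Int.castRingHom ℂ) (2 * (9 - k : ℤ)) * ρ - 1 := by
    have hcast : (Int.castRingHom ℂ) (2 * (9 - k : ℤ)) = ((2 * c : ℝ) : ℂ) := by simp [c]
    rw [hcast]
    exact_mod_cast add_sqrt_sq_sub_one_sq (by linarith : 1 ≤ c)
  rw [cpF_eq_charpoly_map]
  refine Matrix.isRoot_charpoly_of_mulVec_eq_smul ?_ (Matrix.map_mulVec_add_smul_eq_smul _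
    (Fm_mulVec_perronVecA hk) (Fm_mulVec_perronVecB hk) hρ)
  intro h
  have h0 : (2 : ℂ) - 2 * ρ = 0 := by
    simpa [perronVecA, perronVecB, sub_eq_add_neg, mul_comm] using congrFun h ⟨0, by omega⟩
  have hρ1 : ρ = 1 := by exact_mod_cast (by linear_combination -h0 / 2 : (ρ : ℂ) = 1)
  linarith [le_add_of_nonneg_right (Real.sqrt_nonneg (c ^ 2 - 1)) (a := c)]

theorem norm_le_of_isRoot_cpF (hk : k ≤ 6) {z : ℂ} (hz : (cpF k 0 0).IsRoot z) :
    ‖z‖ ≤ (9 - k : ℝ) + √((9 - k : ℝ) ^ 2 - 1) := by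
  rw [cpF_eq_charpoly_map] at hz
  have := Matrix.isRoot_of_isRoot_charpoly_of_aeval_eq_zero
    (by rw [Matrix.aeval_map_map, aeval_Fm_annihPoly hk, map_zero]) hz
  refine norm_le_of_mul_sq_sub_two_mul_add_one_eq_zero ?_ (by simpa [annihPoly] using this)
  linarith [show (k : ℝ) ≤ 6 by exact_mod_cast hk]

end Fk00

/-- For `0 ≤ k ≤ 6`, the spectral radius of `F_{k,0,0}` is
`(9−k) + √((9−k)² − 1)`: this value is a root of the characteristic polynomial of
`F_{k,0,0}` and every complex root has modulus at most this value. -/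
theorem specRad_Fk00 (k : ℕ) (hk : k ≤ 6) :
    (cpF k 0 0).IsRoot
      (((9 - (k : ℝ)) + Real.sqrt ((9 - (k : ℝ)) ^ 2 - 1) : ℝ) : ℂ) ∧
    ∀ z : ℂ, (cpF k 0 0).IsRoot z →
      ‖z‖ ≤ (9 - (k : ℝ)) + Real.sqrt ((9 - (k : ℝ)) ^ 2 - 1) :=
  ⟨isRoot_cpF_add_sqrt hk, fun _ => norm_le_of_isRoot_cpF hk⟩
end

section
/- Every complex root of the characteristic polynomial of the 12×12 integer matrix F_{3,3,3} has modulus exactly 1; in particular, the spectral radius of F_{3,3,3} equals 1. -/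
/-!
A direct computation shows `(F_{3,3,3}^4 - 1)^3 = 0` (the matrix is annihilated by
`(X - 1)^3 (X + 1) (X^2 + 1)`, a divisor of `(X^4 - 1)^3`). By the spectral mapping theorem
for polynomials every eigenvalue `z` then satisfies `(z^4 - 1)^3 = 0`, so `z` is a fourth root
of unity. Roots exist because the characteristic polynomial has degree `12`.
-/

open Matrix

open Polynomial

theorem Matrix.isRoot_of_isRoot_charpoly_of_aeval_eq_zero_s13 {K n : Type*} [Field K] [Fintype n]
    [DecidableEq n] {A : Matrix n n K} {p : K[X]} (hp : aeval A p = 0) {z : K}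
    (hz : A.charpoly.IsRoot z) : p.IsRoot z := by
  cases isEmpty_or_nonempty n
  · simp [charpoly_isEmpty] at hz
  have := spectrum.subset_polynomial_aeval A p ⟨z, mem_spectrum_iff_isRoot_charpoly.2 hz, rfl⟩
  rwa [hp, spectrum.zero_eq, Set.mem_singleton_iff] at this

theorem Matrix.norm_eq_one_of_isRoot_charpoly {n : Type*} [Fintype n]
    [DecidableEq n] {A : Matrix n n ℂ} {d : ℕ} (hd : d ≠ 0) (hA : IsNilpotent (A ^ d - 1))
    {z : ℂ} (hz : A.charpoly.IsRoot z) : ‖z‖ = 1 := by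
  obtain ⟨m, hm⟩ := hA
  have hroot : ((X ^ d - 1) ^ m : ℂ[X]).IsRoot z :=
    isRoot_of_isRoot_charpoly_of_aeval_eq_zero_s13 (by simpa using hm) hz
  have : IsNilpotent (z ^ d - 1) := ⟨m, by simpa using hroot⟩
  exact Complex.norm_eq_one_of_pow_eq_one (sub_eq_zero.1 this.eq_zero) hd

theorem Fm333_pow_four_sub_one_pow_three_eq_zero : (Fm 3 3 3 ^ 4 - 1) ^ 3 = 0 := by
  ext i j
  fin_cases i <;> fin_cases j <;> decide

theorem isNilpotent_map_Fm333_pow_four_sub_one :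
    IsNilpotent ((Fm 3 3 3).map (fun x => (x : ℂ)) ^ 4 - 1) := by
  refine ⟨3, ?_⟩
  have h := congrArg (Int.castRingHom ℂ).mapMatrix Fm333_pow_four_sub_one_pow_three_eq_zero
  rwa [map_pow, map_sub, map_pow, map_one, map_zero] at h

/-- Every complex root of the characteristic polynomial of `F_{3,3,3}` has modulus
exactly `1`; in particular (since roots exist), the spectral radius of `F_{3,3,3}`
equals `1`. -/
theorem specRad_F333 :
    (∀ z : ℂ, (cpF 3 3 3).IsRoot z → ‖z‖ = 1) ∧
    (∃ z : ℂ, (cpF 3 3 3).IsRoot z ∧ ‖z‖ = 1) := by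
  have hnorm : ∀ z : ℂ, (cpF 3 3 3).IsRoot z → ‖z‖ = 1 := fun _ =>
    Matrix.norm_eq_one_of_isRoot_charpoly four_ne_zero isNilpotent_map_Fm333_pow_four_sub_one
  obtain ⟨z, hz⟩ := Complex.exists_root (f := cpF 3 3 3) (by simp [cpF])
  exact ⟨hnorm, z, hz, hnorm z hz⟩
end

section
/- Let ρ be the spectral radius of the 6×6 integer matrix F_{1,1,1}, i.e., the maximum modulus of the complex roots of its characteristic polynomial. Then ρ is a real root of t⁴ − 14t³ + 24t² − 14t + 1 and satisfies 12 < ρ < 13. -/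
open Matrix

open Polynomial

/-!
Computation shows that `F = F_{1,1,1}` is annihilated by `(t² - 1) q(t)` with
`q(t) = t⁴ - 14t³ + 24t² - 14t + 1 = (t² - (7 + √27) t + 1) (t² - (7 - √27) t + 1)`.
A root of `t² - c t + 1` (with `c` real) off the unit circle is real, and `|7 - √27| < 2`, so every
eigenvalue of `F` of modulus `> 1` is the real root `r > 1` of `t² - (7 + √27) t + 1`; as
`r + 1/r = 7 + √27 ∈ (12.19, 12.2)`, we get `12 < r < 13`. Such an eigenvalue exists because
`tr F = 14` exceeds the size `6` of the matrix.
-/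

theorem Matrix.aeval_eq_zero_of_isRoot_charpoly {R K n : Type*} [CommRing R] [Field K]
    [Algebra R K] [Fintype n] [DecidableEq n] {M : Matrix n n K} {p : R[X]} (hp : aeval M p = 0)
    {μ : K} (hμ : M.charpoly.IsRoot μ) : aeval μ p = 0 := by
  have hspec : μ ∈ spectrum K M := mem_spectrum_iff_isRoot_charpoly.mpr hμ
  have : Nontrivial (Matrix n n K) := by
    rcases subsingleton_or_nontrivial (Matrix n n K) with h | h
    · simp [spectrum.of_subsingleton] at hspec
    · exact h
  rw [← aeval_map_algebraMap K] at hp ⊢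
  simpa [hp, spectrum.zero_eq] using
    spectrum.subset_polynomial_aeval M (p.map (algebraMap R K)) ⟨μ, hspec, rfl⟩

theorem Matrix.exists_isRoot_charpoly_one_lt_norm_of_card_lt_norm_trace {n : Type*} [Fintype n]
    [DecidableEq n] (M : Matrix n n ℂ) (h : (Fintype.card n : ℝ) < ‖M.trace‖) :
    ∃ z, M.charpoly.IsRoot z ∧ 1 < ‖z‖ := by
  by_contra! hle
  have hsum : ((M.charpoly.roots.map (‖·‖)).sum) ≤ Fintype.card n := by
    calc _ ≤ (M.charpoly.roots.map (‖·‖)).card • (1 : ℝ) := by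
          refine Multiset.sum_le_card_nsmul _ _ fun x hx => ?_
          obtain ⟨z, hz, rfl⟩ := Multiset.mem_map.mp hx
          exact hle z (isRoot_of_mem_roots hz)
      _ = Fintype.card n := by
          rw [Multiset.card_map, IsAlgClosed.card_roots_eq_natDegree, charpoly_natDegree_eq_dim,
            nsmul_one]
  rw [trace_eq_sum_roots_charpoly] at h
  exact (norm_multiset_sum_le _).trans hsum |>.not_gt h

/-- If `z` is not real, then `z` and `conj z` are the two roots, so `‖z‖² = z * conj z = 1`. -/
theorem Complex.norm_sq_sub_abs_mul_norm_add_one_eq_zero {c : ℝ} {z : ℂ}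
    (hz : z ^ 2 - c * z + 1 = 0) (h1 : 1 < ‖z‖) : ‖z‖ ^ 2 - |c| * ‖z‖ + 1 = 0 := by
  have hconj : (starRingEnd ℂ z) ^ 2 - c * starRingEnd ℂ z + 1 = 0 := by
    simpa using congrArg (starRingEnd ℂ) hz
  have hreal : starRingEnd ℂ z = z := by
    by_contra hne
    have hsum : z + starRingEnd ℂ z = c := by
      have : (z - starRingEnd ℂ z) * (z + starRingEnd ℂ z - c) = 0 := by
        linear_combination hz - hconj
      exact sub_eq_zero.mp ((mul_eq_zero.mp this).resolve_left (sub_ne_zero.mpr (Ne.symm hne)))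
    have hnorm : ‖z‖ ^ 2 = 1 := by
      have : z * starRingEnd ℂ z = 1 := by linear_combination z * hsum - hz
      exact_mod_cast (Complex.mul_conj' z).symm.trans this
    nlinarith
  obtain ⟨x, rfl⟩ : ∃ x : ℝ, (x : ℂ) = z := ⟨z.re, Complex.conj_eq_iff_re.mp hreal⟩
  have hx : x ^ 2 - c * x + 1 = 0 := by exact_mod_cast hz
  have hcx : |c| * |x| = c * x := by
    rw [← abs_mul, abs_of_pos (by nlinarith)]
  rw [Complex.norm_real, Real.norm_eq_abs, sq_abs, hcx]
  exact hx

theorem quartic_eq_mul_quadratics {R : Type*} [CommRing R] {a b : R} (hsum : a + b = 14)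
    (hprod : a * b = 22) (t : R) : t ^ 4 - 14 * t ^ 3 + 24 * t ^ 2 - 14 * t + 1 =
      (t ^ 2 - a * t + 1) * (t ^ 2 - b * t + 1) := by
  linear_combination (t ^ 3 + t) * hsum - t ^ 2 * hprod

lemma aeval_Fm111 :
    aeval (Fm 1 1 1) ((X ^ 2 - 1) * (X ^ 4 - 14 * X ^ 3 + 24 * X ^ 2 - 14 * X + 1) : ℤ[X]) = 0 := by
  simp only [map_mul, map_sub, map_add, map_pow, aeval_X, map_one, map_ofNat]
  decide

lemma trace_Fm111 : (Fm 1 1 1).trace = 14 := by decide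

lemma sextic_of_isRoot_cpF111 {z : ℂ} (hz : (cpF 1 1 1).IsRoot z) :
    (z ^ 2 - 1) * (z ^ 4 - 14 * z ^ 3 + 24 * z ^ 2 - 14 * z + 1) = 0 := by
  have hann := aeval_algHom_apply ((Algebra.ofId ℤ ℂ).mapMatrix (m := Fin (3 + 1 + 1 + 1)))
    (Fm 1 1 1) ((X ^ 2 - 1) * (X ^ 4 - 14 * X ^ 3 + 24 * X ^ 2 - 14 * X + 1))
  rw [aeval_Fm111, map_zero] at hann
  simpa only [map_mul, map_sub, map_add, map_pow, aeval_X, map_one, map_ofNat] using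
    Matrix.aeval_eq_zero_of_isRoot_charpoly hann hz

lemma exists_isRoot_cpF111_one_lt_norm : ∃ z, (cpF 1 1 1).IsRoot z ∧ 1 < ‖z‖ := by
  refine Matrix.exists_isRoot_charpoly_one_lt_norm_of_card_lt_norm_trace _ ?_
  have htrace : ((Fm 1 1 1).map fun x => (x : ℂ)).trace = 14 := by
    simpa [trace_Fm111] using (AddMonoidHom.map_trace (Int.castAddHom ℂ) (Fm 1 1 1)).symm
  rw [htrace]
  norm_num

lemma norm_of_isRoot_cpF111_of_one_lt_norm {z : ℂ} (hz : (cpF 1 1 1).IsRoot z) (h1 : 1 < ‖z‖) :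
    ‖z‖ ^ 4 - 14 * ‖z‖ ^ 3 + 24 * ‖z‖ ^ 2 - 14 * ‖z‖ + 1 = 0 ∧ 12 < ‖z‖ ∧ ‖z‖ < 13 := by
  set s := √27
  have hs2 : s ^ 2 = 27 := Real.sq_sqrt (by norm_num)
  have hs0 : 0 ≤ s := Real.sqrt_nonneg _
  have hs_lb : 5.19 < s := by nlinarith
  have hs_ub : s < 5.2 := by nlinarith
  have hsum : (7 + s) + (7 - s) = 14 := by ring
  have hprod : (7 + s) * (7 - s) = 22 := by linear_combination -hs2
  have hfac := sextic_of_isRoot_cpF111 hz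
  rw [quartic_eq_mul_quadratics (a := ((7 + s : ℝ) : ℂ)) (b := ((7 - s : ℝ) : ℂ))
    (by exact_mod_cast hsum) (by exact_mod_cast hprod)] at hfac
  rcases mul_eq_zero.mp hfac with hsq | hfac
  · have hnorm : ‖z‖ ^ 2 = 1 := by rw [← norm_pow, sub_eq_zero.mp hsq, norm_one]
    nlinarith
  rcases mul_eq_zero.mp hfac with hbig | hsmall
  · have hquad := Complex.norm_sq_sub_abs_mul_norm_add_one_eq_zero hbig h1
    rw [abs_of_nonneg (by positivity)] at hquad
    refine ⟨by rw [quartic_eq_mul_quadratics hsum hprod, hquad, zero_mul], ?_, ?_⟩ <;> nlinarith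
  · have hquad := Complex.norm_sq_sub_abs_mul_norm_add_one_eq_zero hsmall h1
    have hlt : |7 - s| < 2 := by rw [abs_lt]; constructor <;> nlinarith
    nlinarith

/-- If `ρ` is the spectral radius of `F_{1,1,1}` (the maximum modulus of the complex
roots of its characteristic polynomial), then `ρ` is a real root of
`t⁴ − 14t³ + 24t² − 14t + 1` and `12 < ρ < 13`. -/
theorem specRad_F111 (ρ : ℝ)
    (hmem : ∃ z : ℂ, (cpF 1 1 1).IsRoot z ∧ ‖z‖ = ρ)
    (hmax : ∀ z : ℂ, (cpF 1 1 1).IsRoot z → ‖z‖ ≤ ρ) :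
    ρ ^ 4 - 14 * ρ ^ 3 + 24 * ρ ^ 2 - 14 * ρ + 1 = 0 ∧ 12 < ρ ∧ ρ < 13 := by
  obtain ⟨z, hz, rfl⟩ := hmem
  obtain ⟨w, hw, hw1⟩ := exists_isRoot_cpF111_one_lt_norm
  exact norm_of_isRoot_cpF111_of_one_lt_norm hz (hw1.trans_le (hmax w hw))
end
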